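/- arXiv:2104.00907 — 8 statements merged into one kernel-verified Lean document; each statement's English description precedes it below -/
import Mathlib

section
/- Let n ≥ 4 be an even integer and let a be a real number with 2/(n+1) < a ≤ 1. Then the open disk {w ∈ ℂ : |w − a| < a − 2/(n+1)} is contained in Ω_{nL} = φ_{nL}(𝔻). -/
open Complex Metric Set

/-- The function φ_{nL}(z) = 1 + n z/(n+1) + z^n/(n+1). -/
noncomputable def phinL (n : ℕ) (z : ℂ) : ℂ :=
  1 + (n : ℂ) * z / ((n : ℂ) + 1) + z ^ n / ((n : ℂ) + 1)

/-- Ω_{nL} = φ_{nL}(𝔻), the image of the open unit disk. -/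
def OmeganL (n : ℕ) : Set ℂ := phinL n '' ball (0 : ℂ) 1

/-- f is analytic on the unit disk with f(0) = 0 and f'(0) = 1. -/
def IsNormalizedAnalytic (f : ℂ → ℂ) : Prop :=
  AnalyticOnNhd ℂ f (ball (0 : ℂ) 1) ∧ f 0 = 0 ∧ deriv f 0 = 1

/-- p is subordinate to ψ on the unit disk. -/
def Subord (p ψ : ℂ → ℂ) : Prop :=
  ∃ ω : ℂ → ℂ, AnalyticOnNhd ℂ ω (ball (0 : ℂ) 1) ∧ ω 0 = 0 ∧
    (∀ z ∈ ball (0 : ℂ) 1, ω z ∈ ball (0 : ℂ) 1) ∧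
    (∀ z ∈ ball (0 : ℂ) 1, p z = ψ (ω z))

/-- Membership in the class S*_{nL}. -/
def MemSnL (n : ℕ) (f : ℂ → ℂ) : Prop :=
  IsNormalizedAnalytic f ∧ (∀ z ∈ ball (0 : ℂ) 1, z ≠ 0 → f z ≠ 0) ∧
  Subord (fun z => if z = 0 then 1 else z * deriv f z / f z) (phinL n)

theorem stmt0 (n : ℕ) (hn : 4 ≤ n) (hne : Even n) (a : ℝ)
    (ha1 : 2 / ((n : ℝ) + 1) < a) (ha2 : a ≤ 1) :
    ball (a : ℂ) (a - 2 / ((n : ℝ) + 1)) ⊆ OmeganL n := by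
  intro w hw
  have hn1 : (0:ℝ) < (n:ℝ) + 1 := by positivity
  have hn0 : (0:ℝ) < (n:ℝ) := by
    have : (4:ℝ) ≤ (n:ℝ) := by exact_mod_cast hn
    linarith
  have hnC : ((n:ℂ)) ≠ 0 := by
    exact_mod_cast Nat.cast_ne_zero.mpr (by omega)
  set r : ℝ := ‖w - 1‖ with hr_def
  have hr0 : 0 ≤ r := norm_nonneg _
  -- key inequality : (n+1) r < n - 1
  have hwa : ‖w - (a:ℂ)‖ < a - 2 / ((n:ℝ) + 1) := by
    simpa [Metric.mem_ball, dist_eq_norm] using hw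
  have ha1C : ‖(a:ℂ) - 1‖ = 1 - a := by
    rw [show (a:ℂ) - 1 = ((a - 1 : ℝ) : ℂ) by push_cast; ring, Complex.norm_real,
      Real.norm_eq_abs, abs_of_nonpos (by linarith)]
    ring
  have hr_lt : ((n:ℝ) + 1) * r < (n:ℝ) - 1 := by
    have h1 : r ≤ ‖w - (a:ℂ)‖ + ‖(a:ℂ) - 1‖ := by
      have := norm_sub_le_norm_sub_add_norm_sub w (a:ℂ) 1
      simpa [hr_def] using this
    have h2 : r < 1 - 2 / ((n:ℝ) + 1) := by
      rw [ha1C] at h1; linarith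
    have h3 : ((n:ℝ) + 1) * r < ((n:ℝ) + 1) * (1 - 2 / ((n:ℝ) + 1)) :=
      (mul_lt_mul_iff_right₀ hn1).mpr h2
    have h4 : ((n:ℝ) + 1) * (1 - 2 / ((n:ℝ) + 1)) = (n:ℝ) - 1 := by
      field_simp
      ring
    linarith
  set ρ : ℝ := (((n:ℝ) + 1) * r + 1) / (n:ℝ) with hρ_def
  have hρ0 : 0 < ρ := by positivity
  have hρ1 : ρ < 1 := by
    rw [hρ_def, div_lt_one hn0]; linarith
  -- the contraction map
  set F : ℂ → ℂ := fun z => (((n:ℂ) + 1) * (w - 1) - z ^ n) / (n:ℂ) with hF_def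
  have hnorm_nat : ‖((n:ℂ) + 1)‖ = (n:ℝ) + 1 := by
    rw [show ((n:ℂ) + 1) = (((n:ℝ) + 1 : ℝ) : ℂ) by push_cast; ring, Complex.norm_real,
      Real.norm_eq_abs, _root_.abs_of_nonneg (by positivity)]
  have hnorm_n : ‖((n:ℂ))‖ = (n:ℝ) := by simp
  -- F maps closed ball ρ to itself
  have hmaps : ∀ z : ℂ, ‖z‖ ≤ ρ → ‖F z‖ ≤ ρ := by
    intro z hz
    have hz0 : 0 ≤ ‖z‖ := norm_nonneg _
    have h1 : ‖F z‖ = ‖((n:ℂ) + 1) * (w - 1) - z ^ n‖ / (n:ℝ) := by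
      rw [hF_def]; simp [norm_div, hnorm_n]
    have h2 : ‖((n:ℂ) + 1) * (w - 1) - z ^ n‖ ≤ ((n:ℝ) + 1) * r + ρ ^ n := by
      calc ‖((n:ℂ) + 1) * (w - 1) - z ^ n‖
          ≤ ‖((n:ℂ) + 1) * (w - 1)‖ + ‖z ^ n‖ := norm_sub_le _ _
        _ ≤ ((n:ℝ) + 1) * r + ρ ^ n := by
            rw [norm_mul, hnorm_nat, norm_pow]
            have : ‖z‖ ^ n ≤ ρ ^ n := pow_le_pow_left₀ hz0 hz n
            linarith
    have hρn : ρ ^ n ≤ ρ := by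
      calc ρ ^ n ≤ ρ ^ 1 := pow_le_pow_of_le_one hρ0.le hρ1.le (by omega)
        _ = ρ := pow_one ρ
    have h3 : ((n:ℝ) + 1) * r + ρ ≤ (n:ℝ) * ρ := by
      have : (n:ℝ) * ρ = ((n:ℝ) + 1) * r + 1 := by
        rw [hρ_def]; field_simp
      nlinarith [mul_nonneg (le_of_lt hn1) hr0]
    rw [h1, div_le_iff₀ hn0]
    nlinarith
  -- F is Lipschitz with constant ρ^(n-1) on the ball
  have hlip : ∀ z z' : ℂ, ‖z‖ ≤ ρ → ‖z'‖ ≤ ρ →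
      ‖F z - F z'‖ ≤ ρ ^ (n - 1) * ‖z - z'‖ := by
    intro z z' hz hz'
    have h1 : F z - F z' = (z' ^ n - z ^ n) / (n:ℂ) := by
      rw [hF_def]; field_simp
      try ring
    have h2 : ‖z' ^ n - z ^ n‖ ≤ (n:ℝ) * ρ ^ (n - 1) * ‖z' - z‖ := by
      have hgs := geom_sum₂_mul z' z n
      calc ‖z' ^ n - z ^ n‖
          = ‖(∑ i ∈ Finset.range n, z' ^ i * z ^ (n - 1 - i)) * (z' - z)‖ := by
            rw [hgs]
        _ ≤ (∑ i ∈ Finset.range n, ‖z' ^ i * z ^ (n - 1 - i)‖) * ‖z' - z‖ := by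
            rw [norm_mul]
            exact mul_le_mul_of_nonneg_right (norm_sum_le _ _) (norm_nonneg _)
        _ ≤ ((n:ℝ) * ρ ^ (n - 1)) * ‖z' - z‖ := by
            apply mul_le_mul_of_nonneg_right _ (norm_nonneg _)
            calc (∑ i ∈ Finset.range n, ‖z' ^ i * z ^ (n - 1 - i)‖)
                ≤ ∑ _i ∈ Finset.range n, ρ ^ (n - 1) := by
                  apply Finset.sum_le_sum
                  intro i hi
                  have hi' : i < n := Finset.mem_range.mp hi
                  rw [norm_mul, norm_pow, norm_pow]
                  calc ‖z'‖ ^ i * ‖z‖ ^ (n - 1 - i)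
                      ≤ ρ ^ i * ρ ^ (n - 1 - i) := by
                        apply mul_le_mul (pow_le_pow_left₀ (norm_nonneg _) hz' i)
                          (pow_le_pow_left₀ (norm_nonneg _) hz _)
                          (by positivity) (by positivity)
                    _ = ρ ^ (i + (n - 1 - i)) := (pow_add ρ i _).symm
                    _ = ρ ^ (n - 1) := by congr 1; omega
              _ = (n:ℝ) * ρ ^ (n - 1) := by
                  rw [Finset.sum_const, Finset.card_range, nsmul_eq_mul]
    rw [h1, norm_div, hnorm_n, div_le_iff₀ hn0]
    calc ‖z' ^ n - z ^ n‖ ≤ (n:ℝ) * ρ ^ (n - 1) * ‖z' - z‖ := h2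
      _ = ρ ^ (n - 1) * ‖z - z'‖ * (n:ℝ) := by rw [norm_sub_rev]; ring
  -- set up contraction on the closed ball
  haveI : CompleteSpace (Metric.closedBall (0:ℂ) ρ) :=
    (Metric.isClosed_closedBall (x := (0:ℂ)) (ε := ρ)).completeSpace_coe
  haveI hsne : Nonempty (Metric.closedBall (0:ℂ) ρ) := ⟨⟨0, by simp [hρ0.le]⟩⟩
  have hmem : ∀ z : Metric.closedBall (0:ℂ) ρ, ‖z.1‖ ≤ ρ := by
    intro z
    simpa [dist_zero_right] using Metric.mem_closedBall.mp z.2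
  set Ft : Metric.closedBall (0:ℂ) ρ → Metric.closedBall (0:ℂ) ρ := fun z => ⟨F z.1, by
    simpa [Metric.mem_closedBall, dist_zero_right] using hmaps z.1 (hmem z)⟩
    with hFt_def
  have hK1 : ρ ^ (n - 1) < 1 := pow_lt_one₀ hρ0.le hρ1 (by omega)
  set K : NNReal := ⟨ρ ^ (n - 1), by positivity⟩ with hK_def
  have hcontr : ContractingWith K Ft := by
    constructor
    · exact_mod_cast hK1
    · apply LipschitzWith.of_dist_le_mul
      intro x y
      rw [Subtype.dist_eq, Subtype.dist_eq, dist_eq_norm, dist_eq_norm]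
      exact hlip x.1 y.1 (hmem x) (hmem y)
  set zf : Metric.closedBall (0:ℂ) ρ := ContractingWith.fixedPoint Ft hcontr with hzf_def
  have hzf : Ft zf = zf := hcontr.fixedPoint_isFixedPt
  set z : ℂ := zf.1 with hz_def
  have hzρ : ‖z‖ ≤ ρ := hmem zf
  have hzfix : F z = z := congrArg Subtype.val hzf
  refine ⟨z, ?_, ?_⟩
  · simpa [Metric.mem_ball, dist_zero_right] using lt_of_le_of_lt hzρ hρ1
  · -- phinL n z = w
    have h1 : ((n:ℂ) + 1) * (w - 1) - z ^ n = (n:ℂ) * z := by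
      have := hzfix
      rw [hF_def] at this
      field_simp at this
      linear_combination this
    have hn1C : ((n:ℂ) + 1) ≠ 0 := by
      rw [show ((n:ℂ) + 1) = (((n:ℝ) + 1 : ℝ) : ℂ) by push_cast; ring]
      exact_mod_cast ne_of_gt hn1
    rw [phinL]
    field_simp
    linear_combination -h1
end

section
/- Let n ≥ 4 be an even integer and set a₃ = [−(1+4n+n²) + n(n+1)cos(π/(n−1)) + (n+1)cos(nπ/(n−1))] / [n(n+1)cos(π/(n−1)) + (n+1)cos(nπ/(n−1)) − (n+1)²]. Then for every real a with a₃ < a < 2, the open disk {w ∈ ℂ : |w − a| < 2 − a} is contained in Ω_{nL} = φ_{nL}(𝔻). -/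
/-!
On the unit circle, `z = exp (2iu)`, a direct computation gives
`(n+1)² (‖φ z - a‖² - (2-a)²) = 4 ((a-1)(n+1)(n sin² u + sin² (n u)) - n sin² ((n-1) u))`.
With `m = n - 1` and `K = 1 + m sin² (π / 2m)` one has the sharp inequality
`K sin² (m u) ≤ (m+1) sin² u + sin² ((m+1) u)` (equality at `u = π / 2m`), so the right-hand side is
nonnegative as soon as `n ≤ (a-1)(n+1) K`; this is exactly `a₃ < a`, because
`a₃ = 1 + n / ((n+1) K)`. The inequality is proved at a minimum of the `π`-periodic gap on
`[0, π]`: at an interior critical point either `cos (m u) = 0`, and then `u` is an odd multiple of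
`π / 2m`, so `sin u ≥ sin (π / 2m)`; or the critical-point equation turns `m` times the gap into
`(m+1)² sin² u - sin² ((m+1) u) ≥ 0`.
Finally `φ` is a nonconstant entire function, hence an open map, so `Ω = φ 𝔻` is open, contains `a`,
and its frontier lies in `φ (∂𝔻)`, at distance at least `2 - a` from `a`; the disk of radius `2 - a`
about `a` is connected, so it lies in `Ω`.
-/

open Complex Metric Set

namespace Real

theorem abs_sin_nat_mul_le (k : ℕ) (x : ℝ) : |sin (k * x)| ≤ k * |sin x| := by
  induction k with
  | zero => simp
  | succ k ih =>
    calc |sin ((k + 1 : ℕ) * x)| = |sin (k * x) * cos x + cos (k * x) * sin x| := by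
          push_cast; rw [add_mul, one_mul, sin_add]
      _ ≤ |sin (k * x)| * |cos x| + |cos (k * x)| * |sin x| := by
          rw [← abs_mul, ← abs_mul]; exact abs_add_le _ _
      _ ≤ (k : ℝ) * |sin x| * 1 + 1 * |sin x| := by
          gcongr
          exacts [abs_cos_le_one x, abs_cos_le_one _]
      _ = (k + 1 : ℕ) * |sin x| := by push_cast; ring

theorem sin_sq_nat_mul_le (k : ℕ) (x : ℝ) : sin (k * x) ^ 2 ≤ (k : ℝ) ^ 2 * sin x ^ 2 := by
  rw [← sq_abs, ← sq_abs (sin x), ← mul_pow]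
  exact pow_le_pow_left₀ (abs_nonneg _) (abs_sin_nat_mul_le k x) 2

theorem sin_le_sin_of_mem_Icc {δ x : ℝ} (hδ : 0 ≤ δ) (hx : x ∈ Set.Icc δ (π - δ)) :
    sin δ ≤ sin x := by
  rcases le_total x (π / 2) with h | h
  · exact sin_le_sin_of_le_of_le_pi_div_two (by linarith [pi_pos]) h hx.1
  · rw [← sin_pi_sub x]
    exact sin_le_sin_of_le_of_le_pi_div_two (by linarith [pi_pos]) (by linarith) (by linarith [hx.2])

noncomputable def sinSqConst (m : ℕ) : ℝ := 1 + m * sin (π / (2 * m)) ^ 2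

theorem sinSqConst_pos (m : ℕ) : 0 < sinSqConst m := by
  unfold sinSqConst; positivity

noncomputable def sinSqGap (m : ℕ) (u : ℝ) : ℝ :=
  (m + 1) * sin u ^ 2 + sin ((m + 1) * u) ^ 2 - sinSqConst m * sin (m * u) ^ 2

theorem sin_sq_nat_mul_add_pi (j : ℕ) (u : ℝ) : sin (j * (u + π)) ^ 2 = sin (j * u) ^ 2 := by
  rw [mul_add, sin_add_nat_mul_pi, mul_pow, ← pow_mul, mul_comm j 2, pow_mul]
  norm_num

theorem sinSqGap_periodic (m : ℕ) : Function.Periodic (sinSqGap m) π := fun u => by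
  have h := sin_sq_nat_mul_add_pi (m + 1) u
  push_cast at h
  simp only [sinSqGap, sin_sq_nat_mul_add_pi, h, sin_add_pi, neg_sq]

theorem hasDerivAt_sinSqGap (m : ℕ) (u : ℝ) :
    HasDerivAt (sinSqGap m)
      (2 * ((m + 1) * sin u * cos u + (m + 1) * sin ((m + 1) * u) * cos ((m + 1) * u)
        - sinSqConst m * m * sin (m * u) * cos (m * u))) u := by
  have hsq : ∀ k : ℝ, HasDerivAt (fun x => sin (k * x) ^ 2)
      (2 * sin (k * u) * (cos (k * u) * k)) u := fun k => by
    simpa using (((hasDerivAt_id u).const_mul k).sin).fun_pow 2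
  have h := (((hsq 1).const_mul ((m : ℝ) + 1)).fun_add (hsq ((m : ℝ) + 1))).fun_sub
    ((hsq m).const_mul (sinSqConst m))
  simp only [one_mul] at h
  exact h.congr_deriv (by ring)

theorem sinSqGap_nonneg_of_cos_eq_zero {m : ℕ} (hm : 1 ≤ m) {u : ℝ} (hu : u ∈ Set.Ioo 0 π)
    (hcos : cos (m * u) = 0) : 0 ≤ sinSqGap m u := by
  have hmR : (1 : ℝ) ≤ m := by exact_mod_cast hm
  obtain ⟨k, hk⟩ := cos_eq_zero_iff.mp hcos
  have hsm : sin (m * u) ^ 2 = 1 := by nlinarith [sin_sq_add_cos_sq (m * u)]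
  have hsn : sin ((m + 1) * u) ^ 2 = cos u ^ 2 := by
    rw [add_mul, one_mul, sin_add, hcos, zero_mul, add_zero, mul_pow, hsm, one_mul]
  have hodd : (1 : ℝ) ≤ 2 * k + 1 ∧ 2 * (k : ℝ) + 1 ≤ 2 * m - 1 := by
    have h0 : (0 : ℝ) < 2 * k + 1 := by nlinarith [pi_pos, hu.1]
    have h1 : 2 * (k : ℝ) + 1 < 2 * m := by nlinarith [pi_pos, hu.2]
    have h0' : (0 : ℤ) < 2 * k + 1 := by exact_mod_cast h0
    have h1' : 2 * k + 1 < 2 * (m : ℤ) := by exact_mod_cast h1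
    exact ⟨by exact_mod_cast (by omega : (1 : ℤ) ≤ 2 * k + 1),
      by exact_mod_cast (by omega : 2 * k + 1 ≤ 2 * (m : ℤ) - 1)⟩
  have hu_eq : u = (2 * k + 1) * (π / (2 * m)) := by
    field_simp; linarith
  have hδ : sin (π / (2 * m)) ≤ sin u := by
    refine sin_le_sin_of_mem_Icc (by positivity) ⟨?_, ?_⟩ <;> rw [hu_eq]
    · nlinarith [show 0 < π / (2 * m) by positivity]
    · have : π = 2 * m * (π / (2 * m)) := by field_simp
      nlinarith [show 0 < π / (2 * m) by positivity]
  have hδ2 : sin (π / (2 * m)) ^ 2 ≤ sin u ^ 2 :=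
    pow_le_pow_left₀ (sin_nonneg_of_nonneg_of_le_pi (by positivity)
      (div_le_self pi_pos.le (by linarith))) hδ 2
  unfold sinSqGap sinSqConst
  rw [hsm, hsn]
  nlinarith [sin_sq_add_cos_sq u]

theorem sinSqGap_nonneg_of_critical {m : ℕ} (hm : 1 ≤ m) {u : ℝ} (hcos : cos (m * u) ≠ 0)
    (hcrit : ((m : ℝ) + 1) * sin u * cos u
      + ((m : ℝ) + 1) * sin ((m + 1) * u) * cos ((m + 1) * u)
      - sinSqConst m * m * sin (m * u) * cos (m * u) = 0) :
    0 ≤ sinSqGap m u := by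
  set K := sinSqConst m
  have hsin : sin ((m + 1) * u) = sin (m * u) * cos u + cos (m * u) * sin u := by
    rw [add_mul, one_mul, sin_add]
  have hcos' : cos ((m + 1) * u) = cos (m * u) * cos u - sin (m * u) * sin u := by
    rw [add_mul, one_mul, cos_add]
  have hpyth := sin_sq_add_cos_sq (m * u)
  have hK : K * m * sin (m * u) = ((m : ℝ) + 1) * (2 * sin u * cos u * cos (m * u)
      + sin (m * u) * (cos u ^ 2 - sin u ^ 2)) := by
    apply mul_right_cancel₀ hcos
    rw [hsin, hcos'] at hcrit
    linear_combination -hcrit - ((m + 1) * sin u * cos u) * hpyth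
  have hident : m * sinSqGap m u = ((m : ℝ) + 1) ^ 2 * sin u ^ 2 - sin ((m + 1) * u) ^ 2 := by
    unfold sinSqGap
    rw [hsin]
    linear_combination (-sin (m * u)) * hK + ((m : ℝ) + 1) * sin u ^ 2 * hpyth
  have hbound := sin_sq_nat_mul_le (m + 1) u
  push_cast at hbound
  exact nonneg_of_mul_nonneg_right (hident ▸ sub_nonneg.mpr hbound) (Nat.cast_pos.mpr hm)

theorem sinSqGap_nonneg_of_mem_Icc {m : ℕ} (hm : 1 ≤ m) {u : ℝ} (hu : u ∈ Set.Icc 0 π) :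
    0 ≤ sinSqGap m u := by
  have hcont : Continuous (sinSqGap m) := by unfold sinSqGap; fun_prop
  obtain ⟨u₀, hu₀, hmin⟩ := isCompact_Icc.exists_isMinOn (Set.nonempty_Icc.mpr pi_pos.le)
    hcont.continuousOn
  refine le_trans ?_ (hmin hu)
  rcases hu₀.1.eq_or_lt with h0 | h0
  · simp [← h0, sinSqGap]
  rcases hu₀.2.eq_or_lt with hπ | hπ
  · have := sin_nat_mul_pi (m + 1)
    push_cast at this
    simp [hπ, sinSqGap, sin_nat_mul_pi, this]
  have hcrit := (hmin.isLocalMin (Icc_mem_nhds h0 hπ)).hasDerivAt_eq_zero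
    (hasDerivAt_sinSqGap m u₀)
  by_cases hcos : cos (m * u₀) = 0
  · exact sinSqGap_nonneg_of_cos_eq_zero hm ⟨h0, hπ⟩ hcos
  · exact sinSqGap_nonneg_of_critical hm hcos (by linarith)

theorem sinSqGap_nonneg {m : ℕ} (hm : 1 ≤ m) (u : ℝ) : 0 ≤ sinSqGap m u := by
  obtain ⟨v, hv, hvu⟩ := (sinSqGap_periodic m).exists_mem_Ico₀ pi_pos u
  exact hvu ▸ sinSqGap_nonneg_of_mem_Icc hm (Set.Ico_subset_Icc_self hv)

end Real

open Real

theorem sq_norm_phinL_exp_sub (n : ℕ) (a u : ℝ) :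
    ((n : ℝ) + 1) ^ 2 * (‖phinL n (exp ((2 * u : ℝ) * I)) - a‖ ^ 2 - (2 - a) ^ 2)
      = 4 * ((a - 1) * (n + 1) * (n * Real.sin u ^ 2 + Real.sin (n * u) ^ 2)
        - n * Real.sin ((n - 1) * u) ^ 2) := by
  have hn : (n : ℂ) + 1 ≠ 0 := Nat.cast_add_one_ne_zero n
  set E : ℂ := (((n + 1) * (1 - a) : ℝ) : ℂ) + n * exp ((2 * u : ℝ) * I)
    + exp ((2 * (n * u) : ℝ) * I)
  have hE : phinL n (exp ((2 * u : ℝ) * I)) - a = E / ((n : ℂ) + 1) := by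
    rw [eq_div_iff hn, phinL, ← Complex.exp_nat_mul]
    simp only [E]
    push_cast
    field_simp
    ring
  have hre : E.re = (n + 1) * (1 - a) + n * Real.cos (2 * u) + Real.cos (2 * (n * u)) := by
    simp only [E, add_re, mul_re, ofReal_re, natCast_re, natCast_im,
      exp_ofReal_mul_I_re, exp_ofReal_mul_I_im]
    ring
  have him : E.im = n * Real.sin (2 * u) + Real.sin (2 * (n * u)) := by
    simp only [E, add_im, mul_im, ofReal_im, natCast_re, natCast_im,
      exp_ofReal_mul_I_re, exp_ofReal_mul_I_im]
    ring
  have hnorm : ((n : ℝ) + 1) ^ 2 * ‖phinL n (exp ((2 * u : ℝ) * I)) - a‖ ^ 2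
      = E.re ^ 2 + E.im ^ 2 := by
    rw [hE, norm_div, div_pow, Complex.sq_norm, normSq_apply, show ((n : ℂ) + 1) = ((n + 1 : ℝ) : ℂ) by
      push_cast; ring, norm_real, Real.norm_eq_abs, sq_abs]
    field_simp
  rw [mul_sub, hnorm, hre, him, Real.cos_two_mul_eq_one_sub, Real.cos_two_mul_eq_one_sub,
    Real.sin_two_mul, Real.sin_two_mul,
    show ((n : ℝ) - 1) * u = n * u - u by ring, Real.sin_sub]
  linear_combination (4 * (n ^ 2 * Real.sin u ^ 2 + n * Real.sin (n * u) ^ 2)) *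
    Real.sin_sq_add_cos_sq u + (4 * (Real.sin (n * u) ^ 2 + n * Real.sin u ^ 2)) *
    Real.sin_sq_add_cos_sq (n * u)

theorem le_norm_phinL_sub_of_norm_eq_one {n : ℕ} (hn : 2 ≤ n) {a : ℝ} (ha : 1 ≤ a)
    (hK : (n : ℝ) ≤ (a - 1) * (n + 1) * Real.sinSqConst (n - 1)) {z : ℂ} (hz : ‖z‖ = 1) :
    2 - a ≤ ‖phinL n z - a‖ := by
  obtain ⟨t, rfl⟩ := (norm_eq_one_iff z).mp hz
  have hid := sq_norm_phinL_exp_sub n a (t / 2)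
  rw [show 2 * (t / 2) = t by ring] at hid
  have hgap := Real.sinSqGap_nonneg (m := n - 1) (by omega) (t / 2)
  rw [Real.sinSqGap, Nat.cast_pred (by omega), sub_add_cancel] at hgap
  have hsq : (2 - a) ^ 2 ≤ ‖phinL n (exp (t * I)) - a‖ ^ 2 := by
    have hpos : (0 : ℝ) < (n + 1) ^ 2 := by positivity
    refine sub_nonneg.mp (nonneg_of_mul_nonneg_right (hid ▸ ?_) hpos)
    have hS := sq_nonneg (Real.sin ((n - 1) * (t / 2)))
    have hX : (a - 1) * (n + 1) * (Real.sinSqConst (n - 1) * Real.sin ((n - 1) * (t / 2)) ^ 2)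
        ≤ (a - 1) * (n + 1) * (n * Real.sin (t / 2) ^ 2 + Real.sin (n * (t / 2)) ^ 2) :=
      mul_le_mul_of_nonneg_left (by linarith) (by positivity)
    nlinarith [mul_le_mul_of_nonneg_right hK hS]
  nlinarith [norm_nonneg (phinL n (exp (t * I)) - a)]

theorem ball_subset_image_ball_of_le_dist {E F : Type*} [PseudoMetricSpace E] [ProperSpace E]
    [NormedAddCommGroup F] [NormedSpace ℝ F] {f : E → F} {x : E} {R r : ℝ} {c : F}
    (hf : ContinuousOn f (closedBall x R)) (hopen : IsOpen (f '' ball x R))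
    (hc : c ∈ f '' ball x R) (hsphere : ∀ z ∈ sphere x R, r ≤ dist (f z) c) :
    ball c r ⊆ f '' ball x R := by
  rcases le_or_gt r 0 with hr | hr
  · simp [ball_eq_empty.mpr hr]
  have hclosure : closure (f '' ball x R) ⊆ f '' closedBall x R :=
    closure_minimal (image_mono ball_subset_closedBall)
      ((isCompact_closedBall x R).image_of_continuousOn hf).isClosed
  refine (convex_ball c r).isPreconnected.subset_of_closure_inter_subset hopen
    ⟨c, mem_ball_self hr, hc⟩ ?_
  rintro w ⟨hw, hwc⟩
  obtain ⟨z, hz, rfl⟩ := hclosure hw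
  by_cases hzb : z ∈ ball x R
  · exact mem_image_of_mem f hzb
  · have : z ∈ sphere x R := mem_sphere.mpr (le_antisymm hz (not_lt.mp hzb))
    exact absurd (hsphere z this) (not_le.mpr (mem_ball.mp hwc))

theorem continuous_phinL (n : ℕ) : Continuous (phinL n) := by
  unfold phinL; fun_prop

theorem phinL_ofReal (n : ℕ) (x : ℝ) :
    phinL n x = ((1 + n * x / (n + 1) + x ^ n / (n + 1) : ℝ) : ℂ) := by
  simp only [phinL]; push_cast; rfl

theorem phinL_zero (n : ℕ) (hn : n ≠ 0) : phinL n 0 = 1 := by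
  simp [phinL, hn]

theorem phinL_one (n : ℕ) : phinL n 1 = 2 := by
  have : (n : ℂ) + 1 ≠ 0 := Nat.cast_add_one_ne_zero n
  simp only [phinL, mul_one, one_pow]
  field_simp
  ring

theorem isOpenMap_phinL {n : ℕ} (hn : n ≠ 0) : IsOpenMap (phinL n) := by
  have hdiff : Differentiable ℂ (phinL n) := by unfold phinL; fun_prop
  refine (AnalyticOnNhd.is_constant_or_isOpenMap fun z _ => hdiff.analyticAt z).resolve_left ?_
  rintro ⟨w, hw⟩
  have h := (hw 0).trans (hw 1).symm
  rw [phinL_zero n hn, phinL_one] at h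
  norm_num at h

theorem ofReal_mem_OmeganL {n : ℕ} (hn : n ≠ 0) {a : ℝ} (ha : a ∈ Ioo 1 2) :
    (a : ℂ) ∈ OmeganL n := by
  set F : ℝ → ℝ := fun x => 1 + n * x / (n + 1) + x ^ n / (n + 1)
  have hF : ∀ x : ℝ, phinL n x = F x := phinL_ofReal n
  have hF0 : F 0 = 1 := by simp [F, hn]
  have hF1 : F 1 = 2 := by
    simp only [F, mul_one, one_pow]
    field_simp
    ring
  obtain ⟨x, hx, hxa⟩ := intermediate_value_Ioo zero_le_one (by fun_prop : Continuous F).continuousOn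
    (by rw [hF0, hF1]; exact ha)
  refine ⟨x, ?_, by rw [hF, hxa]⟩
  rw [mem_ball_zero_iff, norm_real, Real.norm_of_nonneg hx.1.le]
  exact hx.2

theorem disk_threshold_eq {n : ℕ} (hn : 2 ≤ n) :
    (-(1 + 4 * (n : ℝ) + (n : ℝ) ^ 2)
        + (n : ℝ) * ((n : ℝ) + 1) * Real.cos (Real.pi / ((n : ℝ) - 1))
        + ((n : ℝ) + 1) * Real.cos ((n : ℝ) * Real.pi / ((n : ℝ) - 1))) /
      ((n : ℝ) * ((n : ℝ) + 1) * Real.cos (Real.pi / ((n : ℝ) - 1))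
        + ((n : ℝ) + 1) * Real.cos ((n : ℝ) * Real.pi / ((n : ℝ) - 1))
        - ((n : ℝ) + 1) ^ 2)
      = 1 + n / ((n + 1) * Real.sinSqConst (n - 1)) := by
  have hm : (n : ℝ) - 1 ≠ 0 := by
    have : (2 : ℝ) ≤ n := by exact_mod_cast hn
    linarith
  have hcos_n : Real.cos (n * π / (n - 1)) = -Real.cos (π / (n - 1)) := by
    rw [show n * π / (n - 1) = π / (n - 1) + π by field_simp; ring, Real.cos_add_pi]
  have hcos : Real.cos (π / (n - 1)) = 1 - 2 * Real.sin (π / (2 * (n - 1))) ^ 2 := by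
    rw [← Real.cos_two_mul_eq_one_sub]
    congr 1
    field_simp
  have hK := Real.sinSqConst_pos (n - 1)
  rw [Real.sinSqConst, Nat.cast_pred (by omega)] at hK ⊢
  rw [hcos_n, hcos]
  generalize Real.sin (π / (2 * (n - 1))) ^ 2 = s at hK ⊢
  have hpos : (0 : ℝ) < (n + 1) * (1 + (n - 1) * s) := by positivity
  rw [show -(1 + 4 * (n : ℝ) + n ^ 2) + n * (n + 1) * (1 - 2 * s) + (n + 1) * -(1 - 2 * s)
      = -2 * ((n + 1) * (1 + (n - 1) * s) + n) by ring,
    show n * (n + 1) * (1 - 2 * s) + (n + 1) * -(1 - 2 * s) - ((n : ℝ) + 1) ^ 2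
      = -2 * ((n + 1) * (1 + (n - 1) * s)) by ring,
    mul_div_mul_left _ _ (by norm_num), add_div, div_self hpos.ne']

theorem stmt1_general (n : ℕ) (hn : 4 ≤ n) (a : ℝ)
    (ha1 : (-(1 + 4 * (n : ℝ) + (n : ℝ) ^ 2)
        + (n : ℝ) * ((n : ℝ) + 1) * Real.cos (Real.pi / ((n : ℝ) - 1))
        + ((n : ℝ) + 1) * Real.cos ((n : ℝ) * Real.pi / ((n : ℝ) - 1))) /
      ((n : ℝ) * ((n : ℝ) + 1) * Real.cos (Real.pi / ((n : ℝ) - 1))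
        + ((n : ℝ) + 1) * Real.cos ((n : ℝ) * Real.pi / ((n : ℝ) - 1))
        - ((n : ℝ) + 1) ^ 2) < a)
    (ha2 : a < 2) :
    ball (a : ℂ) (2 - a) ⊆ OmeganL n := by
  rw [disk_threshold_eq (by omega), ← lt_sub_iff_add_lt'] at ha1
  have hden : 0 < ((n : ℝ) + 1) * Real.sinSqConst (n - 1) := by
    have := Real.sinSqConst_pos (n - 1)
    positivity
  have ha : 1 < a := by
    have : (0 : ℝ) < n / ((n + 1) * Real.sinSqConst (n - 1)) := by
      have : (0 : ℝ) < n := by exact_mod_cast (by omega : 0 < n)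
      positivity
    linarith
  have hK : (n : ℝ) ≤ (a - 1) * (n + 1) * Real.sinSqConst (n - 1) := by
    rw [div_lt_iff₀ hden] at ha1
    linarith
  refine ball_subset_image_ball_of_le_dist (continuous_phinL n).continuousOn
    (isOpenMap_phinL (by omega) _ isOpen_ball) (ofReal_mem_OmeganL (by omega) ⟨ha, ha2⟩)
    fun z hz => ?_
  rw [Complex.dist_eq]
  exact le_norm_phinL_sub_of_norm_eq_one (by omega) ha.le hK (by simpa using hz)

theorem stmt1 (n : ℕ) (hn : 4 ≤ n) (hne : Even n) (a : ℝ)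
    (ha1 : (-(1 + 4 * (n : ℝ) + (n : ℝ) ^ 2)
        + (n : ℝ) * ((n : ℝ) + 1) * Real.cos (Real.pi / ((n : ℝ) - 1))
        + ((n : ℝ) + 1) * Real.cos ((n : ℝ) * Real.pi / ((n : ℝ) - 1))) /
      ((n : ℝ) * ((n : ℝ) + 1) * Real.cos (Real.pi / ((n : ℝ) - 1))
        + ((n : ℝ) + 1) * Real.cos ((n : ℝ) * Real.pi / ((n : ℝ) - 1))
        - ((n : ℝ) + 1) ^ 2) < a)
    (ha2 : a < 2) :
    ball (a : ℂ) (2 - a) ⊆ OmeganL n :=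
  stmt1_general n hn a ha1 ha2
end

section
/- Let n ≥ 4 be an even integer, let t₀ = nπ/(n+1), and let α₀ = (1 + n + n·cos(t₀) + cos(n t₀))/(n+1). Then for every z ∈ 𝔻, Re φ_{nL}(z) > α₀. (Consequently S*_{nL} ⊂ S*(α), the class of starlike functions of order α, for every 0 ≤ α ≤ α₀.) -/
open Complex Metric Set

/-!
With `c = cos (π / (n + 1))` one has `α₀ = 1 - c`, so the claim is
`Re (z ^ n + n z) > -(n + 1) c` on the disk. The function `Re (z ^ n + n z)` is harmonic, so by
the minimum principle it suffices to bound it on the unit circle, where it equals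
`n cos t + cos (n t)`. At an interior critical point `sin t + sin (n t) = 0`, hence either
`(n + 1) t ∈ 2πℤ` and the value is `(n + 1) cos t ≥ -(n + 1) c`, or `cos (n t) = -cos t` and the
value is `(n - 1) cos t ≥ 1 - n`; for even `n` the endpoint `t = π` also gives `1 - n`, and
`1 - n ≥ -(n + 1) c` because `cos x ≥ 1 - x ^ 2 / 2`.
-/

lemma re_pos_of_forall_mem_sphere_re_nonneg {g : ℂ → ℂ} {a : ℂ} {r : ℝ}
    (hg : DiffContOnCl ℂ g (ball a r)) (hsphere : ∀ w ∈ sphere a r, 0 ≤ (g w).re)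
    (hcenter : 0 < (g a).re) {z : ℂ} (hz : z ∈ ball a r) : 0 < (g z).re := by
  -- `‖exp (-g)‖ = exp (-Re g)` turns the minimum principle for `Re g` into the maximum principle.
  set f : ℂ → ℂ := fun w => exp (-g w)
  have hf : DiffContOnCl ℂ f (ball a r) := ⟨hg.1.neg.cexp, hg.2.neg.cexp⟩
  have hnorm (w : ℂ) : ‖f w‖ = Real.exp (-(g w).re) := by simp [f, Complex.norm_exp]
  by_contra! hz_re
  have hmax : IsMaxOn (‖f ·‖) (ball a r) z := fun w hw => by
    have hbound : ‖f w‖ ≤ 1 :=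
      norm_le_of_forall_mem_frontier_norm_le isBounded_ball hf
        (fun v hv => by
          rw [hnorm, Real.exp_le_one_iff, neg_nonpos]
          exact hsphere v (frontier_ball_subset_sphere hv))
        (subset_closure hw)
    simp only [hnorm] at hbound ⊢
    exact hbound.trans (Real.one_le_exp_iff.2 (by linarith))
  have hconst := eqOn_of_isPreconnected_of_isMaxOn_norm (convex_ball a r).isPreconnected
    isOpen_ball hf.differentiableOn hz hmax (mem_ball_self (pos_of_mem_ball hz))
  have := congrArg norm hconst
  simp only [Function.const_apply, hnorm, Real.exp_eq_exp, neg_inj] at this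
  linarith

open Real

section

variable {n : ℕ}

lemma sub_one_le_mul_cos_pi_div (hn : 2 ≤ n) :
    (n : ℝ) - 1 ≤ (n + 1) * Real.cos (π / (n + 1)) := by
  have hn' : (3 : ℝ) ≤ n + 1 := by norm_cast; omega
  have hpi : π ^ 2 < 10 := by nlinarith [pi_lt_d2, pi_pos]
  calc (n : ℝ) - 1 ≤ (n + 1) * (1 - (π / (n + 1)) ^ 2 / 2) := by
        rw [div_pow]
        field_simp
        nlinarith
    _ ≤ (n + 1) * Real.cos (π / (n + 1)) := by gcongr; exact one_sub_sq_div_two_le_cos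

lemma cos_nat_mul_pi_div_add_one (n : ℕ) :
    Real.cos (n * π / (n + 1)) = -Real.cos (π / (n + 1)) := by
  rw [← Real.cos_pi_sub]
  congr 1
  field_simp
  ring

lemma cos_nat_mul_nat_mul_pi_div_add_one (hn : Even n) :
    Real.cos (n * (n * π / (n + 1))) = -Real.cos (π / (n + 1)) := by
  obtain ⟨m, rfl⟩ := hn
  have : ((m + m : ℕ) : ℝ) * ((m + m : ℕ) * π / ((m + m : ℕ) + 1))
      = m * (2 * π) - (m + m : ℕ) * π / ((m + m : ℕ) + 1) := by
    push_cast
    field_simp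
    ring
  rw [this, Real.cos_nat_mul_two_pi_sub, cos_nat_mul_pi_div_add_one]

lemma neg_cos_pi_div_le_cos {k : ℤ} {t : ℝ} (ht : t ∈ Ico 0 π)
    (hk : (n + 1) * t = k * (2 * π)) : -Real.cos (π / (n + 1)) ≤ Real.cos t := by
  have hn : (0 : ℝ) < n + 1 := by positivity
  have hk_le : 2 * (k : ℝ) ≤ n := by
    have : 2 * k < (n : ℤ) + 1 := by
      have : (k : ℝ) * (2 * π) < (n + 1) * π := by nlinarith [ht.2]
      exact_mod_cast (by nlinarith [pi_pos] : (2 * k : ℝ) < n + 1)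
    exact_mod_cast (by omega : 2 * k ≤ (n : ℤ))
  rw [← cos_nat_mul_pi_div_add_one]
  refine cos_le_cos_of_nonneg_of_le_pi ht.1 ?_ ?_
  · rw [div_le_iff₀ hn]; nlinarith [pi_pos]
  · rw [le_div_iff₀ hn]; nlinarith [pi_pos]

lemma neg_mul_cos_pi_div_le_of_sin_add_sin_eq_zero (hn : 2 ≤ n) {t : ℝ}
    (ht : t ∈ Ico 0 π) (hcrit : Real.sin t + Real.sin (n * t) = 0) :
    -((n + 1) * Real.cos (π / (n + 1))) ≤ n * Real.cos t + Real.cos (n * t) := by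
  rw [Real.sin_add_sin, mul_eq_zero, mul_eq_zero] at hcrit
  rcases hcrit with (h2 | hsin) | hcos
  · norm_num at h2
  · obtain ⟨k, hk⟩ := Real.sin_eq_zero_iff.1 hsin
    have hk' : (n + 1) * t = k * (2 * π) := by linarith
    have hcos_n : Real.cos (n * t) = Real.cos t := by
      rw [show (n : ℝ) * t = k * (2 * π) - t by linarith, Real.cos_int_mul_two_pi_sub]
    have := neg_cos_pi_div_le_cos ht hk'
    rw [hcos_n]
    nlinarith
  · obtain ⟨k, hk⟩ := Real.cos_eq_zero_iff.1 hcos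
    have hcos_n : Real.cos (n * t) = -Real.cos t := by
      rw [show (n : ℝ) * t = (t - π) - k * (2 * π) by linarith, Real.cos_sub_int_mul_two_pi,
        ← Real.cos_neg, neg_sub, Real.cos_pi_sub]
    have hn1 : (1 : ℝ) ≤ n := by exact_mod_cast (by omega : 1 ≤ n)
    rw [hcos_n]
    nlinarith [sub_one_le_mul_cos_pi_div hn, neg_one_le_cos t]

lemma neg_mul_cos_pi_div_le (hn : 2 ≤ n) (hne : Even n) {t : ℝ} (ht : t ∈ Icc 0 π) :
    -((n + 1) * Real.cos (π / (n + 1))) ≤ n * Real.cos t + Real.cos (n * t) := by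
  set f : ℝ → ℝ := fun t => n * Real.cos t + Real.cos (n * t)
  have hderiv (x : ℝ) : HasDerivAt f (-(n * (Real.sin x + Real.sin (n * x)))) x := by
    refine (((Real.hasDerivAt_cos x).const_mul (n : ℝ)).add
      ((Real.hasDerivAt_cos (n * x)).comp x ((hasDerivAt_id x).const_mul (n : ℝ)))).congr_deriv ?_
    ring
  obtain ⟨t₀, ht₀, hmin⟩ := isCompact_Icc.exists_isMinOn (nonempty_Icc.2 pi_pos.le)
    (show Continuous f by fun_prop).continuousOn
  refine le_trans ?_ (hmin ht)
  rcases ht₀.2.eq_or_lt with rfl | hlt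
  · obtain ⟨m, rfl⟩ := hne
    have : Real.cos (((m + m : ℕ) : ℝ) * π) = 1 := by
      rw [show ((m + m : ℕ) : ℝ) * π = m * (2 * π) by push_cast; ring, Real.cos_nat_mul_two_pi]
    simp only [f, this, Real.cos_pi]
    linarith [sub_one_le_mul_cos_pi_div hn]
  refine neg_mul_cos_pi_div_le_of_sin_add_sin_eq_zero hn ⟨ht₀.1, hlt⟩ ?_
  rcases ht₀.1.eq_or_lt with rfl | hpos
  · simp
  have hzero := (hmin.isLocalMin (Icc_mem_nhds hpos hlt)).hasDerivAt_eq_zero (hderiv t₀)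
  have hn0 : (n : ℝ) ≠ 0 := by exact_mod_cast (by omega : n ≠ 0)
  simpa [hn0] using hzero

lemma neg_mul_cos_pi_div_le_re (hn : 2 ≤ n) (hne : Even n) {w : ℂ} (hw : ‖w‖ = 1) :
    -((n + 1) * Real.cos (π / (n + 1))) ≤ (w ^ n + n * w).re := by
  have hw_exp : w = exp (arg w * I) := by
    simpa [hw] using (norm_mul_exp_arg_mul_I w).symm
  have hre : (w ^ n + n * w).re = n * Real.cos (arg w) + Real.cos (n * arg w) := by
    conv_lhs => rw [hw_exp]
    rw [← Complex.exp_nat_mul, ← mul_assoc, add_re, ← ofReal_natCast, re_ofReal_mul,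
      ← ofReal_mul, exp_ofReal_mul_I_re, exp_ofReal_mul_I_re, add_comm]
  rw [hre, ← Real.cos_abs (arg w), ← Real.cos_abs (n * arg w), abs_mul, Nat.abs_cast]
  refine neg_mul_cos_pi_div_le hn hne ⟨abs_nonneg _, abs_le.2 ⟨?_, arg_le_pi w⟩⟩
  linarith [neg_pi_lt_arg w]

lemma neg_mul_cos_pi_div_lt_re (hn : 2 ≤ n) (hne : Even n) {z : ℂ} (hz : z ∈ ball (0 : ℂ) 1) :
    -((n + 1) * Real.cos (π / (n + 1))) < (z ^ n + n * z).re := by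
  have hc : 0 < (n + 1) * Real.cos (π / (n + 1)) := by
    have : (2 : ℝ) ≤ n := by exact_mod_cast hn
    linarith [sub_one_le_mul_cos_pi_div hn]
  have key := re_pos_of_forall_mem_sphere_re_nonneg
    (g := fun w => w ^ n + n * w + (((n + 1) * Real.cos (π / (n + 1)) : ℝ) : ℂ))
    (by fun_prop : Differentiable ℂ _).diffContOnCl
    (fun w hw => by
      rw [add_re, ofReal_re]
      linarith [neg_mul_cos_pi_div_le_re hn hne (w := w) (by simpa using hw)])
    (by rw [add_re, ofReal_re]; simpa [zero_pow (by omega : n ≠ 0)] using hc) hz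
  rw [add_re, ofReal_re] at key
  linarith

end

lemma phinL_re (n : ℕ) (z : ℂ) : (phinL n z).re = 1 + (z ^ n + n * z).re / (n + 1) := by
  rw [phinL, show (n : ℂ) + 1 = ((n + 1 : ℝ) : ℂ) by push_cast; ring, add_re, add_re,
    div_ofReal_re, div_ofReal_re, one_re, add_re]
  ring

theorem stmt3 (n : ℕ) (hn : 4 ≤ n) (hne : Even n) :
    ∀ z ∈ ball (0 : ℂ) 1,
      (1 + (n : ℝ) + (n : ℝ) * Real.cos ((n : ℝ) * Real.pi / ((n : ℝ) + 1))
          + Real.cos ((n : ℝ) * ((n : ℝ) * Real.pi / ((n : ℝ) + 1)))) / ((n : ℝ) + 1)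
        < (phinL n z).re := by
  intro z hz
  have hn1 : (0 : ℝ) < n + 1 := by positivity
  have key := neg_mul_cos_pi_div_lt_re (by omega) hne hz
  rw [cos_nat_mul_pi_div_add_one, cos_nat_mul_nat_mul_pi_div_add_one hne, phinL_re,
    div_lt_iff₀ hn1, add_mul, div_mul_cancel₀ _ hn1.ne']
  linarith
end

section
/- Let n ≥ 4 be an even integer and let β₀ = arctan( sin(π/n) / (1 − cos(π/n)) ). Then for every z ∈ 𝔻, the principal argument of φ_{nL}(z) satisfies |arg φ_{nL}(z)| < β₀. (Consequently S*_{nL} ⊂ SS*(β), the class of strongly starlike functions of order β, for every β ≥ 2β₀/π.) -/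
/-!
Put α = π/(2n), so that β₀ = π/2 - α. It suffices that Re(e^{iα} φ(z)) > 0 on the disk: this
gives arg φ(z) < π/2 - α, and φ(z̄) = conj φ(z) gives the other side. Writing
z = -e^{-iα} r e^{iθ}, and using that n is even and nα = π/2,
  (n+1) Re(e^{iα} φ(z)) = (n+1) cos α - n r cos θ + r^n sin(nθ + α),
and positivity for r < 1 follows from nonnegativity at r = 1. On the circle, sin(nθ + α) ≥ -1
is absorbed by -n cos θ unless |θ| < 2α; there, with u = θ + α, the expression is
  cos α (n + 1 - n cos u - cos nu) - sin α (n sin u - sin nu),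
which is handled by the concavity of sin, the Taylor bounds of sin and cos, and tan α ≤ 1/2.
It vanishes at θ = -α, where the boundary of Ω_{nL} touches the two rays arg w = ±β₀.
-/

open Complex Metric Set

open Real ComplexConjugate

lemma sin_nat_mul_le_nat_mul_sin (n : ℕ) {v : ℝ} (hv : 0 ≤ v) (hnv : n * v ≤ π) :
    Real.sin (n * v) ≤ n * Real.sin v := by
  rcases Nat.eq_zero_or_pos n with rfl | hn
  · simp
  have hn1 : (1 : ℝ) ≤ n := by exact_mod_cast hn
  have key := strictConcaveOn_sin_Icc.concaveOn.2 (⟨by positivity, hnv⟩ : (n : ℝ) * v ∈ Icc 0 π)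
    (⟨le_rfl, pi_pos.le⟩ : (0 : ℝ) ∈ Icc 0 π) (by positivity : (0 : ℝ) ≤ 1 / n)
    (by rw [sub_nonneg, div_le_one (by positivity)]; exact hn1 : (0 : ℝ) ≤ 1 - 1 / n) (by ring)
  have hv' : (1 / n : ℝ) • ((n : ℝ) * v) + (1 - 1 / (n : ℝ)) • (0 : ℝ) = v := by
    simp only [smul_eq_mul, mul_zero, add_zero]; field_simp
  rw [hv', Real.sin_zero, smul_eq_mul, smul_eq_mul, mul_zero, add_zero] at key
  rw [div_mul_eq_mul_div, one_mul, div_le_iff₀ (by positivity)] at key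
  linarith

lemma sub_sin_le_two_mul_one_sub_cos {x : ℝ} (hx₀ : 0 ≤ x) (hx : x ≤ π / 2) :
    x - Real.sin x ≤ 2 * (1 - Real.cos x) := by
  have hsin := sin_ge_sub_cube hx₀
  have hcos := cos_le_one_sub_mul_cos_sq (x := x) (by rw [abs_of_nonneg hx₀]; linarith [pi_pos])
  have hxπ : x * π ^ 2 ≤ 24 := by
    nlinarith [pi_lt_d2, pi_pos, mul_le_mul_of_nonneg_right hx (sq_nonneg π)]
  have hcube : x ^ 3 / 6 ≤ 2 * (2 / π ^ 2 * x ^ 2) := by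
    rw [← mul_assoc, mul_div_assoc', div_mul_eq_mul_div, le_div_iff₀ (by positivity)]
    nlinarith [mul_le_mul_of_nonneg_left hxπ (sq_nonneg x)]
  linarith

lemma nat_mul_sin_sub_sin_nat_mul_le (n : ℕ) {u : ℝ} (hlo : -π ≤ n * u) (hhi : n * u ≤ π / 2) :
    n * Real.sin u - Real.sin (n * u) ≤ 2 * (n + 1 - n * Real.cos u - Real.cos (n * u)) := by
  have hcos : (n : ℝ) * Real.cos u ≤ n := mul_le_of_le_one_right n.cast_nonneg (cos_le_one u)
  rcases le_total u 0 with hu | hu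
  · have h := sin_nat_mul_le_nat_mul_sin n (neg_nonneg.2 hu) (by linarith)
    rw [mul_neg, Real.sin_neg, Real.sin_neg] at h
    linarith [cos_le_one (n * u)]
  · have h := sub_sin_le_two_mul_one_sub_cos (x := n * u) (by positivity) hhi
    have := mul_le_mul_of_nonneg_left (sin_le hu) n.cast_nonneg
    linarith

lemma neg_sin_le_sin {α y : ℝ} (hα : α ≤ π / 2) (hlo : -α ≤ y) (hhi : y ≤ π + α) :
    -Real.sin α ≤ Real.sin y := by
  have h := Real.sin_sub_sin y (-α)
  rw [Real.sin_neg, sub_neg_eq_add] at h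
  have h1 : 0 ≤ Real.sin ((y - -α) / 2) :=
    sin_nonneg_of_nonneg_of_le_pi (by linarith) (by linarith)
  have h2 : 0 ≤ Real.cos ((y + -α) / 2) := cos_nonneg_of_mem_Icc ⟨by linarith, by linarith⟩
  nlinarith [mul_nonneg h1 h2]

lemma pos_and_le_pi_div_eight {n : ℕ} {α : ℝ} (hn : 4 ≤ n) (hα : n * α = π / 2) :
    0 < α ∧ α ≤ π / 8 := by
  have hn' : (4 : ℝ) ≤ n := by exact_mod_cast hn
  have hα₀ : 0 < α := by
    by_contra! h
    nlinarith [pi_pos, mul_nonpos_of_nonneg_of_nonpos (by linarith : (0 : ℝ) ≤ n) h]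
  exact ⟨hα₀, by nlinarith⟩

lemma sin_le_succ_mul_cos_sub {n : ℕ} {α : ℝ} (hn : 4 ≤ n) (hα : n * α = π / 2) :
    Real.sin α ≤ (n + 1) * Real.cos α - n := by
  obtain ⟨hα₀, hα₈⟩ := pos_and_le_pi_div_eight hn hα
  have := one_sub_sq_div_two_le_cos (x := α)
  nlinarith [sin_le hα₀.le, pi_lt_d2]

lemma two_mul_sin_le_cos {n : ℕ} {α : ℝ} (hn : 4 ≤ n) (hα : n * α = π / 2) :
    2 * Real.sin α ≤ Real.cos α := by
  obtain ⟨hα₀, hα₈⟩ := pos_and_le_pi_div_eight hn hα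
  nlinarith [sin_le hα₀.le, pi_lt_d2, one_sub_sq_div_two_le_cos (x := α)]

lemma succ_mul_cos_sub_nat_mul_cos_add_sin_nonneg {n : ℕ} {α θ : ℝ} (hn : 4 ≤ n)
    (hα : n * α = π / 2) (hθ : |θ| ≤ π) :
    0 ≤ (n + 1) * Real.cos α - n * Real.cos θ + Real.sin (n * θ + α) := by
  obtain ⟨hα₀, hα₈⟩ := pos_and_le_pi_div_eight hn hα
  have hcos₀ : 0 ≤ Real.cos α := cos_nonneg_of_mem_Icc ⟨by linarith, by linarith⟩
  have hncos : (n : ℝ) * Real.cos θ ≤ n := mul_le_of_le_one_right n.cast_nonneg (cos_le_one θ)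
  by_cases hsin : -Real.sin α ≤ Real.sin (n * θ + α)
  · linarith [sin_le_succ_mul_cos_sub hn hα]
  by_cases hfar : Real.cos θ ≤ Real.cos (2 * α)
  · -- (n + 1) cos α - n cos 2α - 1 = (1 - cos α) (2 n cos α + n - 1)
    rw [Real.cos_two_mul] at hfar
    have hn' : (4 : ℝ) ≤ n := by exact_mod_cast hn
    nlinarith [neg_one_le_sin (n * θ + α), mul_le_mul_of_nonneg_left hfar n.cast_nonneg,
      mul_nonneg (sub_nonneg.2 (cos_le_one α))
        (by nlinarith : (0 : ℝ) ≤ 2 * n * Real.cos α + n - 1)]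
  have hnear : |θ| < 2 * α := by
    by_contra! h
    exact hfar (by rw [← cos_abs θ]; exact cos_le_cos_of_nonneg_of_le_pi (by positivity) hθ h)
  have hθ₀ : θ ≤ 0 := by
    by_contra! h
    have hθα : n * θ < π := by
      nlinarith [lt_of_le_of_lt (le_abs_self θ) hnear, (n.cast_nonneg : (0 : ℝ) ≤ n)]
    exact hsin (neg_sin_le_sin (by linarith) (by nlinarith) (by linarith))
  obtain ⟨u, rfl⟩ : ∃ u, θ = u - α := ⟨θ + α, by ring⟩
  have hnθ : n * (u - α) + α = (n * u + α) - π / 2 := by linear_combination -hα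
  rw [hnθ, Real.sin_sub_pi_div_two, Real.cos_sub u α, Real.cos_add (n * u) α]
  have hB := nat_mul_sin_sub_sin_nat_mul_le n (u := u)
    (by nlinarith [neg_abs_le (u - α)]) (by nlinarith)
  have hA : 0 ≤ n + 1 - n * Real.cos u - Real.cos (n * u) := by
    nlinarith [cos_le_one u, cos_le_one (n * u), (n.cast_nonneg : (0 : ℝ) ≤ n)]
  have h2 := two_mul_sin_le_cos hn hα
  have hsin₀ : 0 ≤ Real.sin α := sin_nonneg_of_nonneg_of_le_pi hα₀.le (by linarith)
  rcases le_total (n * Real.sin u - Real.sin (n * u)) 0 with hB₀ | hB₀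
  · nlinarith [mul_nonneg hsin₀ (neg_nonneg.2 hB₀), mul_nonneg hcos₀ hA]
  · nlinarith [mul_le_mul_of_nonneg_right h2 hB₀, mul_le_mul_of_nonneg_left hB hcos₀]

lemma add_mul_add_mul_pow_pos {a b c r : ℝ} {m : ℕ} (hm : m ≠ 0) (ha : 0 < a) (hb : -a ≤ b)
    (hc : -a ≤ c) (habc : 0 ≤ a + b + c) (hr₀ : 0 ≤ r) (hr₁ : r < 1) :
    0 < a + b * r + c * r ^ m := by
  have hrm₀ : 0 ≤ r ^ m := by positivity
  have hrm₁ : r ^ m < 1 := pow_lt_one₀ hr₀ hr₁ hm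
  rcases le_or_gt 0 b with hb₀ | hb₀
  · nlinarith [mul_nonneg hb₀ hr₀, mul_le_mul_of_nonneg_right hc hrm₀]
  · rcases le_or_gt 0 c with hc₀ | hc₀
    · nlinarith [mul_nonneg hc₀ hrm₀]
    · nlinarith

lemma re_exp_mul_phinL_numerator {n : ℕ} {α : ℝ} (hne : Even n) (hα : n * α = π / 2) (r θ : ℝ) :
    (cexp (α * I) * ((n + 1) + n * (-cexp (-α * I) * (r * cexp (θ * I)))
      + (-cexp (-α * I) * (r * cexp (θ * I))) ^ n)).re
      = (n + 1) * Real.cos α + (-n * Real.cos θ) * r + Real.sin (n * θ + α) * r ^ n := by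
  have hαC : (n : ℂ) * α = π / 2 := by exact_mod_cast hα
  have e : cexp (α * I) * ((n + 1) + n * (-cexp (-α * I) * (r * cexp (θ * I)))
      + (-cexp (-α * I) * (r * cexp (θ * I))) ^ n)
      = ((n + 1 : ℝ) : ℂ) * cexp (α * I) + ((-n * r : ℝ) : ℂ) * cexp (θ * I)
        + ((r ^ n : ℝ) : ℂ) * cexp (((n * θ + α - π / 2 : ℝ)) * I) := by
    have h1 : cexp (α * I) * cexp (-α * I) = 1 := by rw [← Complex.exp_add]; simp
    have h2 : cexp (α * I) * (cexp (-α * I) ^ n * cexp (θ * I) ^ n)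
        = cexp (((n * θ + α - π / 2 : ℝ)) * I) := by
      rw [← Complex.exp_nat_mul, ← Complex.exp_nat_mul, ← Complex.exp_add, ← Complex.exp_add]
      congr 1; push_cast; linear_combination (-I) * hαC
    rw [mul_pow, mul_pow, neg_pow, hne.neg_one_pow, one_mul]
    push_cast at h2 ⊢
    linear_combination (-(n : ℂ) * r * cexp (θ * I)) * h1 + (r : ℂ) ^ n * h2
  rw [e, add_re, add_re, re_ofReal_mul, re_ofReal_mul, re_ofReal_mul, exp_ofReal_mul_I_re,
    exp_ofReal_mul_I_re, exp_ofReal_mul_I_re, Real.cos_sub_pi_div_two]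
  ring

lemma re_exp_mul_phinL_pos {n : ℕ} {α : ℝ} (hn : 4 ≤ n) (hne : Even n) (hα : n * α = π / 2)
    {z : ℂ} (hz : ‖z‖ < 1) : 0 < (cexp (α * I) * phinL n z).re := by
  set ζ := -cexp (α * I) * z with hζ
  have hz' : z = -cexp (-α * I) * (‖ζ‖ * cexp (arg ζ * I)) := by
    have h : cexp (-α * I) * cexp (α * I) = 1 := by rw [← Complex.exp_add]; simp
    rw [norm_mul_exp_arg_mul_I, hζ]
    linear_combination (-z) * h
  have hr : ‖ζ‖ = ‖z‖ := by simp [hζ, norm_exp_ofReal_mul_I]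
  have hphi : cexp (α * I) * phinL n z
      = cexp (α * I) * ((n + 1) + n * z + z ^ n) / ((n + 1 : ℝ) : ℂ) := by
    unfold phinL; push_cast; field_simp
  rw [hphi, div_ofReal_re, hz', re_exp_mul_phinL_numerator hne hα]
  refine div_pos ?_ (by positivity)
  obtain ⟨hα₀, hα₈⟩ := pos_and_le_pi_div_eight hn hα
  have hK := sin_le_succ_mul_cos_sub hn hα
  have hsin₀ : 0 ≤ Real.sin α := sin_nonneg_of_nonneg_of_le_pi hα₀.le (by linarith [pi_pos])
  have hn' : (4 : ℝ) ≤ n := by exact_mod_cast hn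
  refine add_mul_add_mul_pow_pos (by omega) (by linarith) ?_ ?_
    (by simpa only [neg_mul, ← sub_eq_add_neg] using
      succ_mul_cos_sub_nat_mul_cos_add_sin_nonneg hn hα (abs_arg_le_pi ζ))
    (norm_nonneg ζ) (hr ▸ hz)
  · nlinarith [mul_le_of_le_one_right (n.cast_nonneg : (0 : ℝ) ≤ n) (cos_le_one (arg ζ))]
  · linarith [neg_one_le_sin (n * arg ζ + α)]

lemma arg_lt_pi_div_two_sub {w : ℂ} {α : ℝ} (hα : α ≤ π / 2) (h : 0 < (cexp (α * I) * w).re) :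
    arg w < π / 2 - α := by
  have hre : (cexp (α * I) * w).re = ‖w‖ * Real.cos (arg w + α) := by
    rw [mul_re, exp_ofReal_mul_I_re, exp_ofReal_mul_I_im, ← norm_mul_cos_arg,
      ← norm_mul_sin_arg, Real.cos_add]
    ring
  by_contra! hle
  have : Real.cos (arg w + α) ≤ 0 :=
    cos_nonpos_of_pi_div_two_le_of_le (by linarith) (by linarith [arg_le_pi w])
  nlinarith [norm_nonneg w]

lemma abs_arg_lt_pi_div_two_sub {w : ℂ} {α : ℝ} (hα₀ : 0 ≤ α) (hα : α ≤ π / 2)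
    (h : 0 < (cexp (α * I) * w).re) (h' : 0 < (cexp (α * I) * conj w).re) :
    |arg w| < π / 2 - α := by
  have h₁ := arg_lt_pi_div_two_sub hα h
  have h₂ := arg_lt_pi_div_two_sub hα h'
  rw [arg_conj, if_neg (by intro he; rw [he] at h₁; linarith [pi_pos])] at h₂
  exact abs_lt.2 ⟨by linarith, h₁⟩

lemma phinL_conj (n : ℕ) (z : ℂ) : phinL n (conj z) = conj (phinL n z) := by
  simp [phinL]

lemma arctan_sin_div_one_sub_cos {x : ℝ} (hx₀ : 0 < x) (hx : x < 2 * π) :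
    Real.arctan (Real.sin x / (1 - Real.cos x)) = π / 2 - x / 2 := by
  have hs : 0 < Real.sin (x / 2) := sin_pos_of_pos_of_lt_pi (by linarith) (by linarith)
  have hsin : Real.sin x = 2 * Real.sin (x / 2) * Real.cos (x / 2) := by
    rw [← Real.sin_two_mul]; ring_nf
  have hcos : 1 - Real.cos x = 2 * Real.sin (x / 2) ^ 2 := by
    have h := Real.cos_two_mul (x / 2)
    rw [mul_div_cancel₀ x two_ne_zero] at h
    linarith [Real.sin_sq_add_cos_sq (x / 2)]
  have e : Real.sin x / (1 - Real.cos x) = Real.tan (π / 2 - x / 2) := by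
    rw [Real.tan_pi_div_two_sub, Real.tan_eq_sin_div_cos, inv_div, hsin, hcos]
    field_simp
  rw [e, Real.arctan_tan (by linarith) (by linarith)]

theorem stmt4 (n : ℕ) (hn : 4 ≤ n) (hne : Even n) :
    ∀ z ∈ ball (0 : ℂ) 1,
      |(phinL n z).arg| <
        Real.arctan (Real.sin (Real.pi / n) / (1 - Real.cos (Real.pi / n))) := by
  intro z hz
  have hz' : ‖z‖ < 1 := mem_ball_zero_iff.1 hz
  have hn' : (4 : ℝ) ≤ n := by exact_mod_cast hn
  have hα : (n : ℝ) * (π / (2 * n)) = π / 2 := by field_simp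
  obtain ⟨hα₀, hα₈⟩ := pos_and_le_pi_div_eight hn hα
  rw [arctan_sin_div_one_sub_cos (by positivity)
    (by rw [div_lt_iff₀ (by positivity)]; nlinarith [pi_pos]), show π / n / 2 = π / (2 * n) by ring]
  refine abs_arg_lt_pi_div_two_sub hα₀.le (by linarith [pi_pos])
    (re_exp_mul_phinL_pos hn hne hα hz') ?_
  rw [← phinL_conj]
  exact re_exp_mul_phinL_pos hn hne hα (by rwa [norm_conj])
end

section
/- Let n ≥ 4 be an even integer and let α be a real number with 2/(n+1) ≤ α ≤ 1. Then the open disk {w ∈ ℂ : |w − 1| < 1 − α} is contained in Ω_{nL} = φ_{nL}(𝔻). (Consequently the Janowski class S*[1−α, 0] is contained in S*_{nL}.) -/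
open Complex Metric Set

/-!
Since φ_{nL}(z) = 1 + (n z + z^n)/(n+1), it suffices to solve n z + z^n = c in the unit disk
whenever |c| < n - 1; the hypothesis on α gives (n+1)(1-α) ≤ n - 1. For such c, the map
z ↦ (c - z^n)/n sends the closed disk of radius r = |c|/(n-1) < 1 into itself and is a
contraction there with constant r^(n-1), so Banach's fixed point theorem produces the root.
-/

theorem norm_pow_succ_sub_pow_succ_le {R : Type*} [SeminormedRing R] {r : ℝ} {a b : R}
    (ha : ‖a‖ ≤ r) (hb : ‖b‖ ≤ r) (k : ℕ) :
    ‖a ^ (k + 1) - b ^ (k + 1)‖ ≤ (k + 1) * r ^ k * ‖a - b‖ := by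
  have hr : 0 ≤ r := (norm_nonneg a).trans ha
  induction k with
  | zero => simp
  | succ k ih =>
    have hsplit : a ^ (k + 2) - b ^ (k + 2) =
        a ^ (k + 1) * (a - b) + (a ^ (k + 1) - b ^ (k + 1)) * b := by
      noncomm_ring
    calc ‖a ^ (k + 2) - b ^ (k + 2)‖
        ≤ ‖a ^ (k + 1)‖ * ‖a - b‖ + ‖a ^ (k + 1) - b ^ (k + 1)‖ * ‖b‖ := by
          rw [hsplit]
          exact (norm_add_le _ _).trans (add_le_add (norm_mul_le _ _) (norm_mul_le _ _))
      _ ≤ r ^ (k + 1) * ‖a - b‖ + ((k + 1) * r ^ k * ‖a - b‖) * r := by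
          gcongr
          exact (norm_pow_le' a k.succ_pos).trans (pow_le_pow_left₀ (norm_nonneg a) ha _)
      _ = ((k + 1 : ℕ) + 1) * r ^ (k + 1) * ‖a - b‖ := by push_cast; ring

section FixedPoint

variable {n : ℕ} {c : ℂ} {r : NNReal}

theorem mapsTo_closedBall_div_sub_pow (hn : 1 ≤ n) (hr : r ≤ 1) (hc : ‖c‖ ≤ (n - 1) * r) :
    MapsTo (fun z : ℂ => (c - z ^ n) / n) (closedBall 0 r) (closedBall 0 r) := by
  intro z hz
  rw [mem_closedBall_zero_iff] at hz ⊢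
  have hnpos : (0 : ℝ) < n := by exact_mod_cast hn
  have hzn : ‖z ^ n‖ ≤ r := by
    rw [norm_pow]
    exact (pow_le_pow_left₀ (norm_nonneg z) hz n).trans (pow_le_of_le_one r.2 hr (by omega))
  calc ‖(c - z ^ n) / n‖ = ‖c - z ^ n‖ / n := by rw [norm_div, norm_natCast]
    _ ≤ ((n - 1) * r + r) / n := by gcongr; exact (norm_sub_le _ _).trans (add_le_add hc hzn)
    _ = r := by field_simp; ring

theorem lipschitzOnWith_div_sub_pow (hn : 1 ≤ n) :
    LipschitzOnWith (r ^ (n - 1)) (fun z : ℂ => (c - z ^ n) / n) (closedBall 0 r) := by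
  obtain ⟨m, rfl⟩ : ∃ m, n = m + 1 := ⟨n - 1, by omega⟩
  refine LipschitzOnWith.of_dist_le_mul fun a ha b hb => ?_
  rw [mem_closedBall_zero_iff] at ha hb
  have hdiff : (c - a ^ (m + 1)) / (m + 1 : ℕ) - (c - b ^ (m + 1)) / (m + 1 : ℕ)
      = (b ^ (m + 1) - a ^ (m + 1)) / (m + 1 : ℕ) := by ring
  calc dist ((c - a ^ (m + 1)) / (m + 1 : ℕ)) ((c - b ^ (m + 1)) / (m + 1 : ℕ))
      = ‖b ^ (m + 1) - a ^ (m + 1)‖ / (m + 1 : ℕ) := by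
        rw [dist_eq_norm, hdiff, norm_div, norm_natCast]
    _ ≤ (m + 1) * r ^ m * ‖b - a‖ / (m + 1 : ℕ) := by
        gcongr; exact norm_pow_succ_sub_pow_succ_le hb ha m
    _ = r ^ (m + 1 - 1) * dist a b := by
        rw [dist_comm, dist_eq_norm]; push_cast; field_simp

theorem exists_mem_ball_natCast_mul_add_pow_eq (hn : 2 ≤ n) (hc : ‖c‖ < n - 1) :
    ∃ z ∈ ball (0 : ℂ) 1, n * z + z ^ n = c := by
  have hn1 : (0 : ℝ) < n - 1 := by
    have : (2 : ℝ) ≤ n := by exact_mod_cast hn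
    linarith
  obtain ⟨r, hr_def⟩ : ∃ r : NNReal, (r : ℝ) = ‖c‖ / (n - 1) :=
    ⟨⟨_, by positivity⟩, rfl⟩
  have hr : (r : ℝ) < 1 := hr_def ▸ (div_lt_one hn1).mpr hc
  have hcr : ‖c‖ = (n - 1) * r := by rw [hr_def]; field_simp
  have hmaps := mapsTo_closedBall_div_sub_pow (c := c) (r := r) (by omega) hr.le hcr.le
  have hcontr : ContractingWith (r ^ (n - 1)) (hmaps.restrict _ _ _) :=
    ⟨pow_lt_one₀ r.2 hr (by omega),
      (lipschitzOnWith_div_sub_pow (by omega)).mapsToRestrict hmaps⟩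
  obtain ⟨z, hz, hfix, -⟩ := hcontr.exists_fixedPoint' isClosed_closedBall.isComplete hmaps
    (mem_closedBall_self r.2) (edist_ne_top _ _)
  refine ⟨z, mem_ball_zero_iff.mpr ((mem_closedBall_zero_iff.mp hz).trans_lt hr), ?_⟩
  have hn0 : (n : ℂ) ≠ 0 := by exact_mod_cast (show n ≠ 0 by omega)
  have hfix' : (c - z ^ n) / n = z := hfix
  field_simp at hfix'
  linear_combination -hfix'

end FixedPoint

theorem ball_one_subset_omeganL {n : ℕ} (hn : 2 ≤ n) :
    ball (1 : ℂ) ((n - 1) / (n + 1)) ⊆ OmeganL n := by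
  intro w hw
  have hn1 : (0 : ℝ) < n + 1 := by positivity
  have hc : ‖(n + 1 : ℂ) * (w - 1)‖ < n - 1 := by
    rw [mem_ball, dist_eq_norm, lt_div_iff₀ hn1] at hw
    rw [norm_mul, show (n + 1 : ℂ) = ((n + 1 : ℕ) : ℂ) by push_cast; rfl, norm_natCast]
    push_cast
    linarith
  obtain ⟨z, hz, hroot⟩ := exists_mem_ball_natCast_mul_add_pow_eq hn hc
  refine ⟨z, hz, ?_⟩
  have hn1' : (n + 1 : ℂ) ≠ 0 := by exact_mod_cast (show n + 1 ≠ 0 by omega)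
  rw [phinL]
  field_simp
  linear_combination hroot

theorem stmt7_general (n : ℕ) (hn : 4 ≤ n) (α : ℝ)
    (hα1 : 2 / ((n : ℝ) + 1) ≤ α) :
    ball (1 : ℂ) (1 - α) ⊆ OmeganL n := by
  refine (ball_subset_ball ?_).trans (ball_one_subset_omeganL (by omega))
  have hn1 : (0 : ℝ) < n + 1 := by positivity
  rw [le_div_iff₀ hn1]
  rw [div_le_iff₀ hn1] at hα1
  linarith

theorem stmt7 (n : ℕ) (hn : 4 ≤ n) (hne : Even n) (α : ℝ)
    (hα1 : 2 / ((n : ℝ) + 1) ≤ α) (hα2 : α ≤ 1) :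
    ball (1 : ℂ) (1 - α) ⊆ OmeganL n :=
  stmt7_general n hn α hα1
end

section
/- Let n ≥ 4 be an even integer. Let f and g be normalized analytic functions on 𝔻 such that Re( f(z)/g(z) ) > 0 and Re( g(z)/z ) > 0 for all z ∈ 𝔻 \ {0}. Then for every z with 0 < |z| < ( √(5n²+6n+5) − 2(n+1) ) / (n−1), one has z f'(z)/f(z) ∈ Ω_{nL}. (This is the S*_{nL}-radius of the class F₁.) -/
open Complex Metric Set

/-!
Write `f = z · p · k` with `k = g / z` and `p = f / g`, both of positive real part on the disc
and equal to `1` at the origin. Then `z f'/f - 1 = z p'/p + z k'/k`, and Carathéodory's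
bound `|p'(z)| (1 - |z|²) ≤ 2 Re p(z)` (Schwarz–Pick applied to the Cayley transform
`(p - 1)/(p + 1)`) bounds each term by `2r/(1 - r²)`, `r = |z|`. On the other hand `Ω_{nL}`
contains the disc `|w - 1| < (n - 1)/(n + 1)`, because `|n z + z^n| ≥ n - 1` on the unit circle
and `n z + z^n` is an open map. Finally `4r/(1 - r²) < (n - 1)/(n + 1)` exactly for `r` below
the stated radius.
-/

open ComplexConjugate

noncomputable def mobius (a z : ℂ) : ℂ := (a - z) / (1 - conj a * z)

lemma normSq_one_sub_conj_mul_sub_normSq_sub (a z : ℂ) :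
    normSq (1 - conj a * z) - normSq (a - z) = (1 - normSq a) * (1 - normSq z) := by
  simp only [normSq_apply, sub_re, sub_im, mul_re, mul_im, conj_re, conj_im, one_re, one_im]
  ring

lemma normSq_lt_one_of_mem_ball {z : ℂ} (hz : z ∈ ball (0 : ℂ) 1) : normSq z < 1 := by
  rw [mem_ball_zero_iff] at hz
  rw [← Complex.sq_norm]
  nlinarith [norm_nonneg z]

lemma one_sub_conj_mul_ne_zero {a z : ℂ} (ha : a ∈ ball (0 : ℂ) 1)
    (hz : z ∈ ball (0 : ℂ) 1) :
    1 - conj a * z ≠ 0 := by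
  rw [mem_ball_zero_iff] at ha hz
  intro h
  have : ‖conj a * z‖ = 1 := by rw [← sub_eq_zero.mp h, norm_one]
  rw [norm_mul, norm_conj] at this
  nlinarith [norm_nonneg a, norm_nonneg z]

lemma mapsTo_mobius {a : ℂ} (ha : a ∈ ball (0 : ℂ) 1) :
    MapsTo (mobius a) (ball 0 1) (ball 0 1) := by
  intro z hz
  have hd := one_sub_conj_mul_ne_zero ha hz
  have hlt : normSq (a - z) < normSq (1 - conj a * z) := by
    nlinarith [normSq_one_sub_conj_mul_sub_normSq_sub a z, normSq_lt_one_of_mem_ball ha,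
      normSq_lt_one_of_mem_ball hz]
  rw [mem_ball_zero_iff, mobius, norm_div, div_lt_one (norm_pos_iff.mpr hd)]
  rw [← Complex.sq_norm, ← Complex.sq_norm] at hlt
  exact lt_of_pow_lt_pow_left₀ 2 (norm_nonneg _) hlt

lemma hasDerivAt_mobius {a z : ℂ} (h : 1 - conj a * z ≠ 0) :
    HasDerivAt (mobius a) ((normSq a - 1) / (1 - conj a * z) ^ 2) z := by
  have hnum : HasDerivAt (fun w => a - w) (-1) z := by
    simpa using (hasDerivAt_id z).const_sub a
  have hden : HasDerivAt (fun w => 1 - conj a * w) (-conj a) z := by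
    simpa using ((hasDerivAt_id z).const_mul (conj a)).const_sub 1
  refine (hnum.div hden h).congr_deriv ?_
  rw [normSq_eq_conj_mul_self]
  ring

lemma differentiableOn_mobius {a : ℂ} (ha : a ∈ ball (0 : ℂ) 1) :
    DifferentiableOn ℂ (mobius a) (ball 0 1) := fun _ hz =>
  (hasDerivAt_mobius (one_sub_conj_mul_ne_zero ha hz)).differentiableAt.differentiableWithinAt

lemma mobius_zero (a : ℂ) : mobius a 0 = a := by simp [mobius]

lemma mobius_self (a : ℂ) : mobius a a = 0 := by simp [mobius]

lemma hasDerivAt_mobius_zero (a : ℂ) : HasDerivAt (mobius a) (normSq a - 1) 0 := by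
  simpa using hasDerivAt_mobius (a := a) (z := 0) (by simp)

lemma hasDerivAt_mobius_self {a : ℂ} (ha : a ∈ ball (0 : ℂ) 1) :
    HasDerivAt (mobius a) (-(1 - normSq a : ℂ)⁻¹) a := by
  have hd := one_sub_conj_mul_ne_zero ha ha
  convert hasDerivAt_mobius hd using 1
  rw [← normSq_eq_conj_mul_self] at hd ⊢
  field_simp
  ring

/-- Schwarz–Pick lemma, infinitesimal form. -/
theorem norm_deriv_mul_le_of_mapsTo_ball {w : ℂ → ℂ} (hd : DifferentiableOn ℂ w (ball 0 1))
    (hm : MapsTo w (ball 0 1) (ball 0 1)) {z : ℂ} (hz : z ∈ ball (0 : ℂ) 1) :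
    ‖deriv w z‖ * (1 - ‖z‖ ^ 2) ≤ 1 - ‖w z‖ ^ 2 := by
  set a := w z
  have ha : a ∈ ball (0 : ℂ) 1 := hm hz
  -- `mobius a ∘ w ∘ mobius z` fixes the origin, so the Schwarz lemma bounds its derivative
  -- there, and the chain rule turns that bound into the claim
  set F := mobius a ∘ w ∘ mobius z
  have hFd : DifferentiableOn ℂ F (ball 0 1) :=
    (differentiableOn_mobius ha).comp (hd.comp (differentiableOn_mobius hz) (mapsTo_mobius hz))
      (hm.comp (mapsTo_mobius hz))
  have hF0 : F 0 = 0 := by simp [F, mobius_zero, a, mobius_self]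
  have hFm : MapsTo F (ball 0 1) (closedBall (F 0) 1) := by
    rw [hF0]
    exact ((mapsTo_mobius ha).comp (hm.comp (mapsTo_mobius hz))).mono_right ball_subset_closedBall
  have hwz : HasDerivAt w (deriv w z) (mobius z 0) := by
    rw [mobius_zero]
    exact (hd.differentiableAt (isOpen_ball.mem_nhds hz)).hasDerivAt
  have hF' : HasDerivAt F (-(1 - normSq a : ℂ)⁻¹ * (deriv w z * (normSq z - 1))) 0 := by
    refine (hasDerivAt_mobius_self ha).comp_of_eq 0 (hwz.comp 0 (hasDerivAt_mobius_zero z)) ?_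
    simp [mobius_zero, a]
  have hSchwarz := Complex.norm_deriv_le_one_of_mapsTo_ball hFd hFm one_pos
  have ha1 := normSq_lt_one_of_mem_ball ha
  have hz1 := normSq_lt_one_of_mem_ball hz
  rw [hF'.deriv, show -(1 - normSq a : ℂ)⁻¹ * (deriv w z * (normSq z - 1))
      = deriv w z * ((1 - normSq z) / (1 - normSq a) : ℝ) by push_cast; ring, norm_mul,
    norm_real, Real.norm_of_nonneg (div_nonneg (by linarith) (by linarith)), mul_div_assoc',
    div_le_one (by linarith)] at hSchwarz
  simpa only [Complex.sq_norm] using hSchwarz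

lemma add_one_ne_zero_of_re_pos {u : ℂ} (hu : 0 < u.re) : u + 1 ≠ 0 := by
  intro h
  have := congrArg re h
  simp only [add_re, one_re, zero_re] at this
  linarith

lemma one_sub_norm_sub_one_div_add_one_sq {u : ℂ} (hu : u + 1 ≠ 0) :
    1 - ‖(u - 1) / (u + 1)‖ ^ 2 = 4 * u.re / normSq (u + 1) := by
  have hn : normSq (u + 1) ≠ 0 := normSq_eq_zero.not.mpr hu
  rw [norm_div, div_pow, Complex.sq_norm, Complex.sq_norm, eq_div_iff hn, sub_mul,
    div_mul_cancel₀ _ hn]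
  simp only [normSq_apply, add_re, add_im, sub_re, sub_im, one_re, one_im]
  ring

lemma norm_sub_one_div_add_one_lt_one {u : ℂ} (hu : 0 < u.re) : ‖(u - 1) / (u + 1)‖ < 1 := by
  have h := one_sub_norm_sub_one_div_add_one_sq (add_one_ne_zero_of_re_pos hu)
  have : 0 < 4 * u.re / normSq (u + 1) :=
    div_pos (by linarith) (normSq_pos.mpr (add_one_ne_zero_of_re_pos hu))
  nlinarith [norm_nonneg ((u - 1) / (u + 1))]

/-- Carathéodory's derivative bound, sharp form. -/
theorem norm_deriv_mul_le_of_re_pos {p : ℂ → ℂ} (hd : DifferentiableOn ℂ p (ball 0 1))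
    (hp : ∀ z ∈ ball (0 : ℂ) 1, 0 < (p z).re) {z : ℂ} (hz : z ∈ ball (0 : ℂ) 1) :
    ‖deriv p z‖ * (1 - ‖z‖ ^ 2) ≤ 2 * (p z).re := by
  have hne : ∀ u ∈ ball (0 : ℂ) 1, p u + 1 ≠ 0 := fun u hu =>
    add_one_ne_zero_of_re_pos (hp u hu)
  -- the Cayley transform of `p` maps the disc into itself
  set w := fun u => (p u - 1) / (p u + 1)
  have hwd : DifferentiableOn ℂ w (ball 0 1) := fun u hu =>
    ((hd u hu).sub_const 1).div ((hd u hu).add_const 1) (hne u hu)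
  have hwm : MapsTo w (ball 0 1) (ball 0 1) := fun u hu => by
    simpa only [mem_ball_zero_iff] using norm_sub_one_div_add_one_lt_one (hp u hu)
  have hpz : HasDerivAt p (deriv p z) z :=
    (hd.differentiableAt (isOpen_ball.mem_nhds hz)).hasDerivAt
  have hwz : HasDerivAt w (2 * deriv p z / (p z + 1) ^ 2) z :=
    ((hpz.sub_const 1).div (hpz.add_const 1) (hne z hz)).congr_deriv (by ring)
  have hSP := norm_deriv_mul_le_of_mapsTo_ball hwd hwm hz
  have hN : 0 < normSq (p z + 1) := normSq_pos.mpr (hne z hz)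
  rw [hwz.deriv, one_sub_norm_sub_one_div_add_one_sq (hne z hz), norm_div, norm_mul, norm_pow,
    Complex.sq_norm, div_mul_eq_mul_div, div_le_div_iff_of_pos_right hN] at hSP
  norm_num at hSP
  linarith

lemma norm_logDeriv_le_of_re_pos {p : ℂ → ℂ} (hd : DifferentiableOn ℂ p (ball 0 1))
    (hp : ∀ z ∈ ball (0 : ℂ) 1, 0 < (p z).re) {z : ℂ} (hz : z ∈ ball (0 : ℂ) 1) :
    ‖logDeriv p z‖ ≤ 2 / (1 - ‖z‖ ^ 2) := by
  have hz1 : 0 < 1 - ‖z‖ ^ 2 := by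
    rw [mem_ball_zero_iff] at hz
    nlinarith [norm_nonneg z]
  have hpz : 0 < ‖p z‖ := lt_of_lt_of_le (hp z hz) (re_le_norm _)
  rw [logDeriv_apply, norm_div, div_le_div_iff₀ hpz hz1]
  linarith [norm_deriv_mul_le_of_re_pos hd hp hz, re_le_norm (p z)]

theorem ball_subset_image_ball_of_isOpen {X Y : Type*} [MetricSpace X] [ProperSpace X]
    [NormedAddCommGroup Y] [NormedSpace ℝ Y] {f : X → Y} {c : X} {r ε : ℝ} (hr : 0 < r)
    (hf : ContinuousOn f (closedBall c r)) (ho : IsOpen (f '' ball c r))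
    (hbd : ∀ x ∈ sphere c r, ε ≤ dist (f x) (f c)) :
    ball (f c) ε ⊆ f '' ball c r := by
  have hcl : ball (f c) ε ∩ f '' closedBall c r ⊆ f '' ball c r := by
    rintro _ ⟨hy, x, hx, rfl⟩
    refine ⟨x, mem_ball.mpr (lt_of_le_of_ne (mem_closedBall.mp hx) fun hxr => ?_), rfl⟩
    exact (hbd x (mem_sphere.mpr hxr)).not_gt hy
  intro y hy
  -- the connected `ball (f c) ε` is covered by the disjoint open sets `f '' ball c r` and
  -- `(f '' closedBall c r)ᶜ`, and meets the first one at `f c`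
  have hε : 0 < ε := lt_of_le_of_lt dist_nonneg hy
  refine (convex_ball (f c) ε).isPreconnected.subset_left_of_subset_union ho
    ((isCompact_closedBall c r).image_of_continuousOn hf).isClosed.isOpen_compl
    (disjoint_compl_right.mono_left (image_mono ball_subset_closedBall))
    (fun y' hy' => ?_) ⟨f c, mem_ball_self hε, c, mem_ball_self hr, rfl⟩ hy
  by_cases hy'K : y' ∈ f '' closedBall c r
  · exact Or.inl (hcl ⟨hy', hy'K⟩)
  · exact Or.inr hy'K

lemma norm_mul_add_pow_ge_of_norm_eq_one (n : ℕ) {z : ℂ} (hz : ‖z‖ = 1) :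
    (n : ℝ) - 1 ≤ ‖(n : ℂ) * z + z ^ n‖ := by
  have h := norm_sub_norm_le ((n : ℂ) * z) (-z ^ n)
  rwa [norm_mul, norm_neg, norm_pow, hz, norm_natCast, mul_one, one_pow, sub_neg_eq_add] at h

lemma ball_subset_image_mul_add_pow {n : ℕ} (hn : n ≠ 0) :
    ball (0 : ℂ) (n - 1) ⊆ (fun z : ℂ => n * z + z ^ n) '' ball 0 1 := by
  set ψ := fun z : ℂ => n * z + z ^ n
  have hψ : Differentiable ℂ ψ := by fun_prop
  have hψ0 : ψ 0 = 0 := by simp [ψ, hn]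
  have hopen : IsOpenMap ψ := by
    refine (hψ.differentiableOn.analyticOnNhd isOpen_univ).is_constant_or_isOpenMap.resolve_left ?_
    rintro ⟨w, hw⟩
    have h : ψ 1 = ψ 0 := (hw 1).trans (hw 0).symm
    simp only [ψ, hψ0, mul_one, one_pow] at h
    exact_mod_cast h
  have := ball_subset_image_ball_of_isOpen (ε := n - 1) one_pos hψ.continuous.continuousOn
    (hopen _ isOpen_ball) fun z hz => by
      rw [hψ0, dist_zero_right]
      exact norm_mul_add_pow_ge_of_norm_eq_one n (mem_sphere_zero_iff_norm.mp hz)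
  rwa [hψ0] at this

lemma ball_subset_OmeganL {n : ℕ} (hn : n ≠ 0) :
    ball (1 : ℂ) ((n - 1) / (n + 1)) ⊆ OmeganL n := by
  intro w hw
  have hn1 : (0 : ℝ) < n + 1 := by positivity
  have hn1' : (n + 1 : ℂ) ≠ 0 := by exact_mod_cast (Nat.succ_ne_zero n)
  have hc : (n + 1 : ℂ) * (w - 1) ∈ ball (0 : ℂ) (n - 1) := by
    rw [mem_ball_zero_iff, norm_mul, ← dist_eq_norm, show ‖(n + 1 : ℂ)‖ = n + 1 by
      exact_mod_cast norm_natCast (n + 1)]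
    rw [mem_ball, lt_div_iff₀ hn1] at hw
    linarith
  obtain ⟨z, hz, hzw⟩ := ball_subset_image_mul_add_pow hn hc
  refine ⟨z, hz, ?_⟩
  simp only at hzw
  rw [phinL]
  field_simp
  linear_combination hzw

lemma lt_one_and_four_mul_div_lt_of_lt {a r : ℝ} (ha : 1 < a) (hr0 : 0 ≤ r)
    (hr : r < (√(5 * a ^ 2 + 6 * a + 5) - 2 * (a + 1)) / (a - 1)) :
    r < 1 ∧ 4 * r / (1 - r ^ 2) < (a - 1) / (a + 1) := by
  set s := √(5 * a ^ 2 + 6 * a + 5)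
  have hs2 : s ^ 2 = 5 * a ^ 2 + 6 * a + 5 := Real.sq_sqrt (by positivity)
  have hs0 : 0 ≤ s := Real.sqrt_nonneg _
  rw [lt_div_iff₀ (by linarith)] at hr
  -- the bound is the positive root of `(a - 1) r ^ 2 + 4 (a + 1) r - (a - 1)`
  have hsq : (r * (a - 1) + 2 * (a + 1)) ^ 2 < s ^ 2 :=
    pow_lt_pow_left₀ (by linarith) (by nlinarith) two_ne_zero
  have hs : s < 3 * a + 1 := by nlinarith
  have hr1 : r < 1 := by nlinarith
  refine ⟨hr1, ?_⟩
  rw [div_lt_div_iff₀ (by nlinarith) (by linarith)]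
  nlinarith

lemma dslope_zero_of_ne {g : ℂ → ℂ} (hg0 : g 0 = 0) {z : ℂ} (hz : z ≠ 0) :
    dslope g 0 z = g z / z := by
  rw [dslope_of_ne _ hz, slope_def_field, hg0, sub_zero, sub_zero]

lemma re_dslope_pos {g : ℂ → ℂ} {s : Set ℂ} (hg0 : g 0 = 0) (hg' : 0 < (deriv g 0).re)
    (hg : ∀ z ∈ s, z ≠ 0 → 0 < (g z / z).re) : ∀ z ∈ s, 0 < (dslope g 0 z).re := by
  intro z hz
  rcases eq_or_ne z 0 with rfl | hz0
  · rwa [dslope_same]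
  · rw [dslope_zero_of_ne hg0 hz0]
    exact hg z hz hz0

lemma re_dslope_div_dslope_pos {f g : ℂ → ℂ} {s : Set ℂ} (hf0 : f 0 = 0) (hg0 : g 0 = 0)
    (h' : 0 < (deriv f 0 / deriv g 0).re) (h : ∀ z ∈ s, z ≠ 0 → 0 < (f z / g z).re) :
    ∀ z ∈ s, 0 < (dslope f 0 z / dslope g 0 z).re := by
  intro z hz
  rcases eq_or_ne z 0 with rfl | hz0
  · rwa [dslope_same, dslope_same]
  · rw [dslope_zero_of_ne hf0 hz0, dslope_zero_of_ne hg0 hz0,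
      div_div_div_cancel_right₀ hz0]
    exact h z hz hz0

lemma mul_deriv_div_sub_one_eq {f g : ℂ → ℂ} (hf0 : f 0 = 0) {z : ℂ} (hz : z ≠ 0)
    (hfd : DifferentiableAt ℂ (dslope f 0) z) (hgd : DifferentiableAt ℂ (dslope g 0) z)
    (hf : dslope f 0 z ≠ 0) (hg : dslope g 0 z ≠ 0) :
    z * deriv f z / f z - 1 =
      z * (logDeriv (fun u => dslope f 0 u / dslope g 0 u) z + logDeriv (dslope g 0) z) := by
  have hf_eq : f = fun u => u * dslope f 0 u := funext fun u => by
    simpa [hf0] using (sub_smul_dslope f 0 u).symm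
  have hlog : logDeriv f z = 1 / z + logDeriv (dslope f 0) z := by
    have h := logDeriv_mul (f := fun u : ℂ => u) z hz hf differentiableAt_fun_id hfd
    simp only [logDeriv_id'] at h
    conv_lhs => rw [hf_eq]
    exact h
  rw [logDeriv_div z hf hg hfd hgd, sub_add_cancel, mul_div_assoc, ← logDeriv_apply, hlog,
    mul_add, mul_one_div_cancel hz, add_sub_cancel_left]

theorem norm_mul_deriv_div_sub_one_le {f g : ℂ → ℂ} (hf : IsNormalizedAnalytic f)
    (hg : IsNormalizedAnalytic g)
    (hfg : ∀ z ∈ ball (0 : ℂ) 1, z ≠ 0 → 0 < (f z / g z).re)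
    (hgz : ∀ z ∈ ball (0 : ℂ) 1, z ≠ 0 → 0 < (g z / z).re)
    {z : ℂ} (hz : z ∈ ball (0 : ℂ) 1) (hz0 : z ≠ 0) :
    ‖z * deriv f z / f z - 1‖ ≤ 4 * ‖z‖ / (1 - ‖z‖ ^ 2) := by
  obtain ⟨hfa, hf0, hf'⟩ := hf
  obtain ⟨hga, hg0, hg'⟩ := hg
  have hball : ball (0 : ℂ) 1 ∈ nhds 0 := isOpen_ball.mem_nhds (mem_ball_self one_pos)
  have hhd := (Complex.differentiableOn_dslope hball).mpr hfa.differentiableOn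
  have hkd := (Complex.differentiableOn_dslope hball).mpr hga.differentiableOn
  have hk := re_dslope_pos hg0 (by simp [hg']) hgz
  have hp := re_dslope_div_dslope_pos hf0 hg0 (by simp [hf', hg']) hfg
  have hk0 : ∀ u ∈ ball (0 : ℂ) 1, dslope g 0 u ≠ 0 := fun u hu h => by
    simpa [h] using hk u hu
  have hpd : DifferentiableOn ℂ (fun u => dslope f 0 u / dslope g 0 u) (ball 0 1) :=
    hhd.div hkd hk0
  have hh0 : dslope f 0 z ≠ 0 := fun h => by simpa [h] using hp z hz
  have hnhds := isOpen_ball.mem_nhds hz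
  rw [mul_deriv_div_sub_one_eq hf0 hz0 (hhd.differentiableAt hnhds) (hkd.differentiableAt hnhds)
    hh0 (hk0 z hz), norm_mul]
  calc ‖z‖ * ‖logDeriv (fun u => dslope f 0 u / dslope g 0 u) z + logDeriv (dslope g 0) z‖
      ≤ ‖z‖ * (2 / (1 - ‖z‖ ^ 2) + 2 / (1 - ‖z‖ ^ 2)) := by
        gcongr
        exact (norm_add_le _ _).trans (add_le_add (norm_logDeriv_le_of_re_pos hpd hp hz)
          (norm_logDeriv_le_of_re_pos hkd hk hz))
    _ = 4 * ‖z‖ / (1 - ‖z‖ ^ 2) := by ring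

theorem stmt14_general (n : ℕ) (hn : 4 ≤ n)
    (f g : ℂ → ℂ) (hf : IsNormalizedAnalytic f) (hg : IsNormalizedAnalytic g)
    (hfg : ∀ z ∈ ball (0 : ℂ) 1, z ≠ 0 → 0 < (f z / g z).re)
    (hgz : ∀ z ∈ ball (0 : ℂ) 1, z ≠ 0 → 0 < (g z / z).re) :
    ∀ z : ℂ, 0 < ‖z‖ →
      ‖z‖ <
        (Real.sqrt (5 * (n : ℝ) ^ 2 + 6 * (n : ℝ) + 5) - 2 * ((n : ℝ) + 1)) / ((n : ℝ) - 1) →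
      z * deriv f z / f z ∈ OmeganL n := by
  intro z hz0 hzr
  have hn1 : (1 : ℝ) < n := by exact_mod_cast (by omega : 1 < n)
  obtain ⟨hz1, hzn⟩ := lt_one_and_four_mul_div_lt_of_lt hn1 (norm_nonneg z) hzr
  refine ball_subset_OmeganL (by omega) (mem_ball_iff_norm.mpr ?_)
  calc ‖z * deriv f z / f z - 1‖ ≤ 4 * ‖z‖ / (1 - ‖z‖ ^ 2) :=
        norm_mul_deriv_div_sub_one_le hf hg hfg hgz (mem_ball_zero_iff.mpr hz1)
          (norm_pos_iff.mp hz0)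
    _ < (n - 1) / (n + 1) := hzn

theorem stmt14 (n : ℕ) (hn : 4 ≤ n) (hne : Even n)
    (f g : ℂ → ℂ) (hf : IsNormalizedAnalytic f) (hg : IsNormalizedAnalytic g)
    (hfg : ∀ z ∈ ball (0 : ℂ) 1, z ≠ 0 → 0 < (f z / g z).re)
    (hgz : ∀ z ∈ ball (0 : ℂ) 1, z ≠ 0 → 0 < (g z / z).re) :
    ∀ z : ℂ, 0 < ‖z‖ →
      ‖z‖ <
        (Real.sqrt (5 * (n : ℝ) ^ 2 + 6 * (n : ℝ) + 5) - 2 * ((n : ℝ) + 1)) / ((n : ℝ) - 1) →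
      z * deriv f z / f z ∈ OmeganL n :=
  stmt14_general n hn f g hf hg hfg hgz
end

section
/- Let n ≥ 4 be an even integer, let 1 < β ≤ 2, and let s ∈ (0,1] be the unique root of the equation rⁿ + nr = (n+1)(β−1) in (0,1]. If f ∈ S*_{nL}, then for every z with 0 < |z| < s, Re( z f'(z)/f(z) ) < β. (This is the M(β)-radius of the class S*_{nL}.) -/
open Complex Metric Set

/-!
By the Schwarz lemma the Schwarz function ω of the subordination satisfies `‖ω z‖ ≤ ‖z‖`, and
`Re φ_{nL}(w) ≤ 1 + (n‖w‖ + ‖w‖ⁿ)/(n+1)`, a strictly increasing function of `‖w‖` which equals `β`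
at `‖w‖ = s`.
-/

theorem Subord.exists_norm_le {p ψ : ℂ → ℂ} (h : Subord p ψ) {z : ℂ} (hz : z ∈ ball (0 : ℂ) 1) :
    ∃ w, ‖w‖ ≤ ‖z‖ ∧ p z = ψ w := by
  obtain ⟨ω, hωa, hω0, hωmap, hωeq⟩ := h
  refine ⟨ω z, ?_, hωeq z hz⟩
  exact norm_le_norm_of_mapsTo_ball (fun x hx => (hωa x hx).differentiableAt.differentiableWithinAt)
    (fun x hx => ball_subset_closedBall (hωmap x hx)) hω0 (mem_ball_zero_iff.1 hz)

theorem MemSnL.exists_mul_deriv_div_eq_phinL {n : ℕ} {f : ℂ → ℂ} (hf : MemSnL n f) {z : ℂ}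
    (hz : z ∈ ball (0 : ℂ) 1) (hz0 : z ≠ 0) :
    ∃ w, ‖w‖ ≤ ‖z‖ ∧ z * deriv f z / f z = phinL n w := by
  simpa only [if_neg hz0] using hf.2.2.exists_norm_le hz

theorem re_phinL_le (n : ℕ) (w : ℂ) :
    (phinL n w).re ≤ 1 + (n * ‖w‖ + ‖w‖ ^ n) / (n + 1) := by
  have hn1 : ‖(n : ℂ) + 1‖ = n + 1 := by exact_mod_cast Complex.norm_natCast (n + 1)
  have hphi : phinL n w = 1 + (n * w + w ^ n) / (n + 1) := by
    unfold phinL; ring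
  calc (phinL n w).re = 1 + ((n * w + w ^ n) / (n + 1)).re := by simp [hphi]
    _ ≤ 1 + ‖(n * w + w ^ n) / (n + 1)‖ := by gcongr; exact re_le_norm _
    _ ≤ 1 + (n * ‖w‖ + ‖w‖ ^ n) / (n + 1) := by
      rw [norm_div, hn1]
      gcongr
      refine (norm_add_le _ _).trans_eq ?_
      rw [norm_mul, norm_pow, Complex.norm_natCast]

theorem re_phinL_lt {n : ℕ} (hn : 1 ≤ n) {w : ℂ} {s : ℝ} (hws : ‖w‖ < s) :
    (phinL n w).re < 1 + (n * s + s ^ n) / (n + 1) := by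
  refine (re_phinL_le n w).trans_lt ?_
  gcongr

theorem stmt18_general (n : ℕ) (hn : 4 ≤ n) (β : ℝ)
    (s : ℝ) (hs : s ∈ Set.Ioc (0 : ℝ) 1)
    (hroot : s ^ n + (n : ℝ) * s = ((n : ℝ) + 1) * (β - 1))
    (f : ℂ → ℂ) (hf : MemSnL n f) :
    ∀ z : ℂ, 0 < ‖z‖ → ‖z‖ < s →
      (z * deriv f z / f z).re < β := by
  intro z hz0 hzs
  have hz : z ∈ ball (0 : ℂ) 1 := mem_ball_zero_iff.2 (hzs.trans_le hs.2)
  obtain ⟨w, hwz, hw⟩ := hf.exists_mul_deriv_div_eq_phinL hz (norm_pos_iff.1 hz0)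
  have hβ : 1 + ((n : ℝ) * s + s ^ n) / (n + 1) = β := by
    field_simp
    linarith
  rw [hw, ← hβ]
  exact re_phinL_lt (by omega) (hwz.trans_lt hzs)

theorem stmt18 (n : ℕ) (hn : 4 ≤ n) (hne : Even n) (β : ℝ) (hβ1 : 1 < β) (hβ2 : β ≤ 2)
    (s : ℝ) (hs : s ∈ Set.Ioc (0 : ℝ) 1)
    (hroot : s ^ n + (n : ℝ) * s = ((n : ℝ) + 1) * (β - 1))
    (f : ℂ → ℂ) (hf : MemSnL n f) :
    ∀ z : ℂ, 0 < ‖z‖ → ‖z‖ < s →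
      (z * deriv f z / f z).re < β :=
  stmt18_general n hn β s hs hroot f hf
end

section
/- Let n ≥ 4 be an even integer, let 0 ≤ α < 1, and let s ∈ (0,1] be the unique root of the equation rⁿ + nr = (n+1)(1−α) in (0,1]. If f ∈ S*_{nL}, then for every z with 0 < |z| < s, |z f'(z)/f(z) − 1| < 1 − α. (This is the S*[1−α, 0]-radius of the class S*_{nL}.) -/
open Complex Metric Set

/-! By the Schwarz lemma, `z f'(z)/f(z) = φ_{nL}(w)` with `|w| ≤ |z|`, and
`|φ_{nL}(w) - 1| ≤ (n|w| + |w|ⁿ)/(n+1)`; the right-hand side is strictly increasing in `|w|`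
and equals `1 - α` at `|w| = s`. -/

theorem Subord.exists_norm_le_eq {p ψ : ℂ → ℂ} (h : Subord p ψ) {z : ℂ}
    (hz : z ∈ ball (0 : ℂ) 1) : ∃ w : ℂ, ‖w‖ ≤ ‖z‖ ∧ p z = ψ w := by
  obtain ⟨ω, hωa, hω0, hωmap, hωeq⟩ := h
  refine ⟨ω z, ?_, hωeq z hz⟩
  exact norm_le_norm_of_mapsTo_ball hωa.differentiableOn
    (fun x hx => ball_subset_closedBall (hωmap x hx)) hω0 (mem_ball_zero_iff.mp hz)

theorem MemSnL.exists_norm_le_eq_phinL {n : ℕ} {f : ℂ → ℂ} (hf : MemSnL n f) {z : ℂ}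
    (hz : z ∈ ball (0 : ℂ) 1) (hz0 : z ≠ 0) :
    ∃ w : ℂ, ‖w‖ ≤ ‖z‖ ∧ z * deriv f z / f z = phinL n w := by
  obtain ⟨w, hw, hpw⟩ := hf.2.2.exists_norm_le_eq hz
  exact ⟨w, hw, by simpa only [if_neg hz0] using hpw⟩

theorem phinL_sub_one (n : ℕ) (w : ℂ) :
    phinL n w - 1 = ((n : ℂ) * w + w ^ n) / ((n : ℂ) + 1) := by
  rw [phinL]; ring

theorem norm_phinL_sub_one_le (n : ℕ) (w : ℂ) :
    ‖phinL n w - 1‖ ≤ ((n : ℝ) * ‖w‖ + ‖w‖ ^ n) / ((n : ℝ) + 1) := by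
  rw [phinL_sub_one, norm_div, show ((n : ℂ) + 1) = ((n + 1 : ℕ) : ℂ) by push_cast; rfl,
    Complex.norm_natCast, Nat.cast_succ]
  gcongr
  calc ‖(n : ℂ) * w + w ^ n‖ ≤ ‖(n : ℂ) * w‖ + ‖w ^ n‖ := norm_add_le _ _
    _ = (n : ℝ) * ‖w‖ + ‖w‖ ^ n := by rw [norm_mul, norm_pow, Complex.norm_natCast]

theorem norm_phinL_sub_one_lt {n : ℕ} (hn : 0 < n) {w : ℂ} {s : ℝ} (hws : ‖w‖ < s) :
    ‖phinL n w - 1‖ < ((n : ℝ) * s + s ^ n) / ((n : ℝ) + 1) := by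
  refine (norm_phinL_sub_one_le n w).trans_lt ?_
  gcongr ?_ / _
  have hpow : ‖w‖ ^ n ≤ s ^ n := pow_le_pow_left₀ (norm_nonneg w) hws.le n
  have hlin : (n : ℝ) * ‖w‖ < (n : ℝ) * s := by gcongr
  linarith

theorem stmt19_general (n : ℕ) (hn : 4 ≤ n) (α : ℝ)
    (s : ℝ) (hs : s ∈ Set.Ioc (0 : ℝ) 1)
    (hroot : s ^ n + (n : ℝ) * s = ((n : ℝ) + 1) * (1 - α))
    (f : ℂ → ℂ) (hf : MemSnL n f) :
    ∀ z : ℂ, 0 < ‖z‖ → ‖z‖ < s →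
      ‖z * deriv f z / f z - 1‖ < 1 - α := by
  intro z hz0 hzs
  have hz : z ∈ ball (0 : ℂ) 1 := mem_ball_zero_iff.mpr (hzs.trans_le hs.2)
  obtain ⟨w, hwz, hfw⟩ := hf.exists_norm_le_eq_phinL hz (norm_pos_iff.mp hz0)
  have hα : 1 - α = ((n : ℝ) * s + s ^ n) / ((n : ℝ) + 1) := by
    field_simp
    linarith
  rw [hfw, hα]
  exact norm_phinL_sub_one_lt (by omega) (hwz.trans_lt hzs)

theorem stmt19 (n : ℕ) (hn : 4 ≤ n) (hne : Even n) (α : ℝ) (hα1 : 0 ≤ α) (hα2 : α < 1)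
    (s : ℝ) (hs : s ∈ Set.Ioc (0 : ℝ) 1)
    (hroot : s ^ n + (n : ℝ) * s = ((n : ℝ) + 1) * (1 - α))
    (f : ℂ → ℂ) (hf : MemSnL n f) :
    ∀ z : ℂ, 0 < ‖z‖ → ‖z‖ < s →
      ‖z * deriv f z / f z - 1‖ < 1 - α :=
  stmt19_general n hn α s hs hroot f hf
end
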